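/- arXiv:1908.01677 — 5 statements merged into one kernel-verified Lean document; each statement's English description precedes it below -/
import Mathlib

section
/- Ramsey-type selection theorem: For all positive integers k, m, n, c there is a constant R_k(n;m;c) such that the following holds. Let X be a finite set with |X| ≥ R_k(n;m;c), and suppose that for every subset V ⊆ X we are given a coloring ρ_V of the k-element subsets of V with c colors. Then there exist an n-element subset Y ⊆ X and a function M assigning to each m-element subset Z of Y a set M_Z ⊆ X \ Y, such that the sets M_Z for distinct m-element subsets Z of Y are pairwise disjoint, and for each m-element subset Z ⊆ Y, all k-element subsets of Z receive the same color under the coloring ρ_{Z ∪ M_Z}. -/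
open Finset

theorem hyper_ramsey (k : ℕ) (κ : Type) [Fintype κ] :
    ∀ N : ℕ, ∃ R : ℕ, ∀ (α : Type) [LinearOrder α] (S : Finset α) (f : Finset α → κ),
      R ≤ S.card → ∃ T ⊆ S, N ≤ T.card ∧
        ∀ e₁ ⊆ T, e₁.card = k → ∀ e₂ ⊆ T, e₂.card = k → f e₁ = f e₂ := by
  classical
  induction k with
  | zero =>
    intro N
    refine ⟨N, fun α _ S f hS => ⟨S, Finset.Subset.refl S, hS, ?_⟩⟩
    intro e₁ _ h₁ e₂ _ h₂
    rw [Finset.card_eq_zero.mp h₁, Finset.card_eq_zero.mp h₂]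
  | succ k IH =>
    choose Rk hRk using IH
    -- end-homogeneous extraction
    let g : ℕ → ℕ := fun L => Nat.rec 0 (fun _ ih => Rk ih + 1) L
    have hg : ∀ L, g (L + 1) = Rk (g L) + 1 := fun _ => rfl
    have inner : ∀ (L : ℕ) (α : Type) [LinearOrder α] (S : Finset α) (f : Finset α → κ),
        g L ≤ S.card → ∃ T, T ⊆ S ∧ T.card = L ∧ ∃ col : α → κ,
          ∀ x ∈ T, ∀ e ⊆ T.filter (fun y => x < y), e.card = k → f (insert x e) = col x := by
      intro L
      induction L with
      | zero =>
        intro α _ S f _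
        exact ⟨∅, Finset.empty_subset S, Finset.card_empty, fun _ => f ∅, by simp⟩
      | succ L IHL =>
        intro α _ S f hS
        rw [hg] at hS
        have hSne : S.Nonempty := Finset.card_pos.mp (by omega)
        set x := S.min' hSne with hx
        have hxS : x ∈ S := S.min'_mem hSne
        have hcard' : Rk (g L) ≤ (S.erase x).card := by
          rw [Finset.card_erase_of_mem hxS]; omega
        obtain ⟨T', hT'sub, hT'card, hT'mono⟩ :=
          hRk (g L) α (S.erase x) (fun e => f (insert x e)) hcard'
        obtain ⟨T'', hT''sub, hT''card, col'', hcol''⟩ := IHL α T' f hT'card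
        have hxlt : ∀ y ∈ T'', x < y := by
          intro y hy
          have hyS : y ∈ S.erase x := hT'sub (hT''sub hy)
          exact lt_of_le_of_ne (S.min'_le y (Finset.mem_of_mem_erase hyS))
            (Ne.symm (Finset.ne_of_mem_erase hyS))
        have hxT'' : x ∉ T'' := fun h => lt_irrefl x (hxlt x h)
        refine ⟨insert x T'', ?_, ?_, ?_⟩
        · intro y hy
          rcases Finset.mem_insert.mp hy with rfl | hy
          · exact hxS
          · exact Finset.mem_of_mem_erase (hT'sub (hT''sub hy))
        · rw [Finset.card_insert_of_notMem hxT'', hT''card]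
        · have hfilx : (insert x T'').filter (fun y => x < y) = T'' := by
            ext y
            simp only [Finset.mem_filter, Finset.mem_insert]
            constructor
            · rintro ⟨rfl | hy, hlt⟩
              · exact absurd hlt (lt_irrefl x)
              · exact hy
            · intro hy; exact ⟨Or.inr hy, hxlt y hy⟩
          by_cases hex : ∃ e₀, e₀ ⊆ T'' ∧ e₀.card = k
          · obtain ⟨e₀, he₀sub, he₀card⟩ := hex
            refine ⟨fun y => if y = x then f (insert x e₀) else col'' y, ?_⟩
            intro y hy e hesub hecard
            rcases Finset.mem_insert.mp hy with rfl | hy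
            · dsimp only; rw [if_pos rfl]
              rw [hfilx] at hesub
              exact hT'mono e (fun a ha => hT''sub (hesub ha)) hecard
                e₀ (fun a ha => hT''sub (he₀sub ha)) he₀card
            · have hyx : y ≠ x := fun h => hxT'' (h ▸ hy)
              dsimp only; rw [if_neg hyx]
              have : (insert x T'').filter (fun z => y < z) = T''.filter (fun z => y < z) := by
                ext z
                simp only [Finset.mem_filter, Finset.mem_insert]
                constructor
                · rintro ⟨rfl | hz, hlt⟩
                  · exact absurd (lt_trans (hxlt y hy) hlt) (lt_irrefl x)
                  · exact ⟨hz, hlt⟩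
                · rintro ⟨hz, hlt⟩; exact ⟨Or.inr hz, hlt⟩
              rw [this] at hesub
              exact hcol'' y hy e hesub hecard
          · refine ⟨fun y => if y = x then f ∅ else col'' y, ?_⟩
            intro y hy e hesub hecard
            rcases Finset.mem_insert.mp hy with rfl | hy
            · rw [hfilx] at hesub
              exact absurd ⟨e, hesub, hecard⟩ hex
            · have hyx : y ≠ x := fun h => hxT'' (h ▸ hy)
              dsimp only; rw [if_neg hyx]
              have : (insert x T'').filter (fun z => y < z) = T''.filter (fun z => y < z) := by
                ext z
                simp only [Finset.mem_filter, Finset.mem_insert]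
                constructor
                · rintro ⟨rfl | hz, hlt⟩
                  · exact absurd (lt_trans (hxlt y hy) hlt) (lt_irrefl x)
                  · exact ⟨hz, hlt⟩
                · rintro ⟨hz, hlt⟩; exact ⟨Or.inr hz, hlt⟩
              rw [this] at hesub
              exact hcol'' y hy e hesub hecard
    -- main step
    intro N
    refine ⟨g (Fintype.card κ * N + 1), fun α _ S f hS => ?_⟩
    obtain ⟨T, hTsub, hTcard, col, hcol⟩ := inner (Fintype.card κ * N + 1) α S f hS
    have hpig : ∃ v ∈ (Finset.univ : Finset κ), N < (T.filter (fun y => col y = v)).card := by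
      apply Finset.exists_lt_card_fiber_of_mul_lt_card_of_maps_to
      · intro a _; exact Finset.mem_univ _
      · rw [hTcard, Finset.card_univ]; omega
    obtain ⟨v, _, hv⟩ := hpig
    refine ⟨T.filter (fun y => col y = v), fun a ha => hTsub (Finset.mem_filter.mp ha).1,
      le_of_lt hv, ?_⟩
    have key : ∀ e ⊆ T.filter (fun y => col y = v), e.card = k + 1 → f e = v := by
      intro e hesub hecard
      have hene : e.Nonempty := Finset.card_pos.mp (by omega)
      set x := e.min' hene with hx
      have hxe : x ∈ e := e.min'_mem hene
      have hxf := Finset.mem_filter.mp (hesub hxe)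
      have herase : (e.erase x).card = k := by
        rw [Finset.card_erase_of_mem hxe, hecard]; omega
      have hsub2 : e.erase x ⊆ T.filter (fun y => x < y) := by
        intro y hy
        have hye : y ∈ e := Finset.mem_of_mem_erase hy
        refine Finset.mem_filter.mpr ⟨(Finset.mem_filter.mp (hesub hye)).1, ?_⟩
        exact lt_of_le_of_ne (e.min'_le y hye) (Ne.symm (Finset.ne_of_mem_erase hy))
      have := hcol x hxf.1 (e.erase x) hsub2 herase
      rw [Finset.insert_erase hxe] at this
      rw [this, hxf.2]
    intro e₁ h₁ hc₁ e₂ h₂ hc₂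
    rw [key e₁ h₁ hc₁, key e₂ h₂ hc₂]


-- rank of the image of i under a strictly monotone enumeration
theorem rank_lemma {β : Type} [LinearOrder β] [DecidableEq β] {q : ℕ} (f : Fin q → β) (hf : StrictMono f)
    (i : Fin q) :
    ((Finset.univ.image f).filter (· < f i)).card = i.val := by
  rw [Finset.filter_image, Finset.card_image_of_injective _ hf.injective]
  have h1 : Finset.univ.filter (fun a => f a < f i) = Finset.univ.filter (· < i) := by
    ext a; simp [hf.lt_iff_lt]
  have h2 : (Finset.univ.filter (· < i)) = Finset.Iio i := by ext a; simp
  rw [h1, h2, Fin.card_Iio]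

-- strict monotonicity of rank within a finset
theorem rk_strictMonoOn {β : Type} [LinearOrder β] (P : Finset β) {a b : β}
    (ha : a ∈ P) (hab : a < b) :
    (P.filter (· < a)).card < (P.filter (· < b)).card := by
  apply Finset.card_lt_card
  constructor
  · intro x hx
    rcases Finset.mem_filter.mp hx with ⟨h1, h2⟩
    exact Finset.mem_filter.mpr ⟨h1, lt_trans h2 hab⟩
  · intro hsub
    have : a ∈ P.filter (· < a) := hsub (Finset.mem_filter.mpr ⟨ha, hab⟩)
    exact absurd (Finset.mem_filter.mp this).2 (lt_irrefl a)

theorem rk_injOn {β : Type} [LinearOrder β] (P : Finset β) {a b : β}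
    (ha : a ∈ P) (hb : b ∈ P)
    (h : (P.filter (· < a)).card = (P.filter (· < b)).card) : a = b := by
  rcases lt_trichotomy a b with hlt | heq | hgt
  · exact absurd h (Nat.ne_of_lt (rk_strictMonoOn P ha hlt))
  · exact heq
  · exact absurd h.symm (Nat.ne_of_lt (rk_strictMonoOn P hb hgt))

theorem getD_sort_mem (J : Finset ℕ) (a : ℕ) (ha : a < J.card) :
    (J.sort (· ≤ ·)).getD a 0 ∈ J := by
  have hlen : a < (J.sort (· ≤ ·)).length := by rwa [Finset.length_sort]
  rw [List.getD_eq_getElem _ _ hlen]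
  exact (Finset.mem_sort _).mp (List.getElem_mem hlen)

theorem getD_sort_strictMono (J : Finset ℕ) {a b : ℕ} (hab : a < b) (hb : b < J.card) :
    (J.sort (· ≤ ·)).getD a 0 < (J.sort (· ≤ ·)).getD b 0 := by
  have hlenb : b < (J.sort (· ≤ ·)).length := by rwa [Finset.length_sort]
  have hlena : a < (J.sort (· ≤ ·)).length := lt_trans (by omega) hlenb
  rw [List.getD_eq_getElem _ _ hlena, List.getD_eq_getElem _ _ hlenb]
  have hs := (Finset.sortedLT_sort J).pairwise
  exact List.pairwise_iff_getElem.mp hs a b hlena hlenb hab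

theorem getD_sort_mono (J : Finset ℕ) {a b : ℕ} (hab : a ≤ b) (hb : b < J.card) :
    (J.sort (· ≤ ·)).getD a 0 ≤ (J.sort (· ≤ ·)).getD b 0 := by
  rcases Nat.lt_or_ge a b with h | h
  · exact le_of_lt (getD_sort_strictMono J h hb)
  · have : a = b := le_antisymm hab h
    rw [this]

/-- Ramsey-type selection theorem.  For all positive integers `k, m, n, c` there
is a constant `R` such that: for every finite set `X` with `|X| ≥ R` and every
system of colorings `ρ V : (V choose k) → [c]`, one for each `V ⊆ X` (modelled
as `ρ : Finset α → Finset α → Fin c`, where only values on `k`-subsets of `V`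
matter), there exist an `n`-element `Y ⊆ X` and an assignment `Z ↦ M Z ⊆ X \ Y`
to the `m`-element subsets `Z` of `Y`, with the sets `M Z` pairwise disjoint,
such that each such `Z` is monochromatic under the coloring `ρ (Z ∪ M Z)`. -/
theorem ramsey_selection (k m n c : ℕ) (hk : 0 < k) (hm : 0 < m)
    (hn : 0 < n) (hc : 0 < c) :
    ∃ R : ℕ, ∀ (α : Type) [DecidableEq α] (X : Finset α)
      (ρ : Finset α → Finset α → Fin c), R ≤ X.card →
      ∃ Y ⊆ X, Y.card = n ∧ ∃ M : Finset α → Finset α,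
        (∀ Z ⊆ Y, Z.card = m → M Z ⊆ X \ Y) ∧
        (∀ Z₁ ⊆ Y, ∀ Z₂ ⊆ Y, Z₁.card = m → Z₂.card = m → Z₁ ≠ Z₂ →
          Disjoint (M Z₁) (M Z₂)) ∧
        (∀ Z ⊆ Y, Z.card = m → ∀ e₁ ⊆ Z, ∀ e₂ ⊆ Z, e₁.card = k → e₂.card = k →
          ρ (Z ∪ M Z) e₁ = ρ (Z ∪ M Z) e₂) := by
  classical
  by_cases hmn : m ≤ n
  swap
  · -- m > n : vacuous
    refine ⟨n, fun α _ X ρ hX => ?_⟩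
    obtain ⟨Y, hYX, hYcard⟩ := Finset.exists_subset_card_eq hX
    have himp : ∀ Z : Finset α, Z ⊆ Y → Z.card = m → False := by
      intro Z hZ hZc
      have := Finset.card_le_card hZ
      omega
    exact ⟨Y, hYX, hYcard, fun _ => ∅,
      fun Z hZ hZc => absurd hZc (fun h => himp Z hZ h),
      fun Z₁ h₁ Z₂ h₂ hc₁ hc₂ _ => absurd hc₁ (fun h => himp Z₁ h₁ h),
      fun Z hZ hZc => absurd hZc (fun h => himp Z hZ h)⟩
  -- main case
  obtain ⟨p₀, hp₀⟩ := hyper_ramsey k (Fin c) m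
  set p := max p₀ 1 with hp_def
  have hp1 : 1 ≤ p := le_max_right _ _
  set Q := Nat.choose n m with hQ_def
  have hQ1 : 1 ≤ Q := Nat.choose_pos hmn
  set B := Q * p + 1 with hB_def
  set N₀ := n * B + Q * p with hN₀_def
  have hpN₀ : p ≤ N₀ := le_trans (Nat.le_mul_of_pos_left p hQ1) (Nat.le_add_left _ _)
  have hN₀pos : 0 < N₀ := lt_of_lt_of_le hp1 hpN₀
  obtain ⟨R₁, hR₁⟩ := hyper_ramsey p (Finset (Fin p) → Fin c) N₀
  refine ⟨R₁, fun α _ X ρ hX => ?_⟩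
  letI : LinearOrder α := IsWellOrder.linearOrder WellOrderingRel
  -- the coloring of p-subsets by position-color-vectors
  set rk : Finset α → α → ℕ := fun P a => (P.filter (· < a)).card with hrk_def
  set χ : Finset α → Finset (Fin p) → Fin c :=
    fun P S => ρ P (P.filter (fun a => rk P a ∈ S.image Fin.val)) with hχ_def
  obtain ⟨Y₀', hY₀'sub, hY₀'card, hmono'⟩ := hR₁ α X χ hX
  obtain ⟨Y₀, hY₀sub', hY₀card⟩ := Finset.exists_subset_card_eq hY₀'card
  have hY₀sub : Y₀ ⊆ X := hY₀sub'.trans hY₀'sub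
  have hmono : ∀ P₁ ⊆ Y₀, P₁.card = p → ∀ P₂ ⊆ Y₀, P₂.card = p → χ P₁ = χ P₂ :=
    fun P₁ h₁ hc₁ P₂ h₂ hc₂ =>
      hmono' P₁ (h₁.trans hY₀sub') hc₁ P₂ (h₂.trans hY₀sub') hc₂
  -- enumeration of Y₀
  set φ := Y₀.orderIsoOfFin hY₀card with hφ_def
  set Ψ : ℕ → α := fun t => if h : t < N₀ then (φ ⟨t, h⟩ : α) else (φ ⟨0, hN₀pos⟩ : α)
    with hΨ_def
  have hΨmem : ∀ t, Ψ t ∈ Y₀ := by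
    intro t
    simp only [hΨ_def]
    split <;> exact Finset.coe_mem _
  have hΨlt : ∀ t t' : ℕ, t < t' → t' < N₀ → Ψ t < Ψ t' := by
    intro t t' htt ht'
    have ht : t < N₀ := lt_trans htt ht'
    simp only [hΨ_def, dif_pos ht, dif_pos ht']
    exact Subtype.coe_lt_coe.mpr (φ.lt_iff_lt.mpr (by exact htt))
  have hΨinj : ∀ t t' : ℕ, t < N₀ → t' < N₀ → Ψ t = Ψ t' → t = t' := by
    intro t t' ht ht' heq
    rcases lt_trichotomy t t' with h | h | h
    · exact absurd heq (ne_of_lt (hΨlt t t' h ht'))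
    · exact h
    · exact absurd heq.symm (ne_of_lt (hΨlt t' t h ht))
  -- the chosen n-set Y
  set yIdx : ℕ → ℕ := fun j => j * B + Q * p with hyIdx_def
  have hyIdx_lt : ∀ j, j < n → yIdx j < N₀ := by
    intro j hj
    simp only [hyIdx_def, hN₀_def]
    have : j * B < n * B := by
      apply Nat.mul_lt_mul_of_lt_of_le hj (le_refl B); omega
    omega
  have hyIdx_mono : ∀ j j', j < j' → yIdx j < yIdx j' := by
    intro j j' h
    simp only [hyIdx_def]
    have : j * B < j' * B := by
      apply Nat.mul_lt_mul_of_lt_of_le h (le_refl B); omega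
    omega
  set Y : Finset α := (Finset.range n).image (fun j => Ψ (yIdx j)) with hY_def
  have hYinj : ∀ j ∈ Finset.range n, ∀ j' ∈ Finset.range n,
      Ψ (yIdx j) = Ψ (yIdx j') → j = j' := by
    intro j hj j' hj' heq
    rw [Finset.mem_range] at hj hj'
    have := hΨinj _ _ (hyIdx_lt j hj) (hyIdx_lt j' hj') heq
    rcases lt_trichotomy j j' with h | h | h
    · exact absurd this (ne_of_lt (hyIdx_mono j j' h))
    · exact h
    · exact absurd this.symm (ne_of_lt (hyIdx_mono j' j h))
  have hYcard : Y.card = n := by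
    rw [hY_def, Finset.card_image_of_injOn hYinj, Finset.card_range]
  have hYsub : Y ⊆ X := by
    intro a ha
    rw [hY_def] at ha
    obtain ⟨j, _, rfl⟩ := Finset.mem_image.mp ha
    exact hY₀sub (hΨmem _)
  -- the reference p-subset and the position pattern T
  set P₀ : Finset α := (Finset.range p).image Ψ with hP₀_def
  have hP₀card : P₀.card = p := by
    rw [hP₀_def, Finset.card_image_of_injOn, Finset.card_range]
    intro t ht t' ht' heq
    have ht2 : t < p := by simpa using ht
    have ht2' : t' < p := by simpa using ht'
    exact hΨinj t t' (lt_of_lt_of_le ht2 hpN₀) (lt_of_lt_of_le ht2' hpN₀) heq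
  have hP₀sub : P₀ ⊆ Y₀ := by
    intro a ha
    obtain ⟨t, _, rfl⟩ := Finset.mem_image.mp ha
    exact hΨmem _
  set v : Finset (Fin p) → Fin c := χ P₀ with hv_def
  obtain ⟨T', hT'sub, hT'card, hT'mono⟩ := hp₀ (Fin p) Finset.univ v
    (by rw [Finset.card_univ, Fintype.card_fin]; exact le_max_left _ _)
  obtain ⟨T, hTsub', hTcard⟩ := Finset.exists_subset_card_eq hT'card
  have hTmono : ∀ S₁ ⊆ T, S₁.card = k → ∀ S₂ ⊆ T, S₂.card = k → v S₁ = v S₂ :=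
    fun S₁ h₁ hc₁ S₂ h₂ hc₂ => hT'mono S₁ (h₁.trans hTsub') hc₁ S₂ (h₂.trans hTsub') hc₂
  -- per-Z data
  set 𝒵 : Finset (Finset α) := Y.powersetCard m with h𝒵_def
  have h𝒵card : 𝒵.card = Q := by
    rw [h𝒵_def, Finset.card_powersetCard, hYcard]
  set sIdx : Finset α → ℕ :=
    fun Z => if h : Z ∈ 𝒵 then ((𝒵.equivFin) ⟨Z, h⟩ : Fin 𝒵.card).val else 0 with hsIdx_def
  have hsIdx_lt : ∀ Z, sIdx Z < Q := by
    intro Z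
    simp only [hsIdx_def]
    split
    · rename_i hZ
      rw [← h𝒵card]
      exact (𝒵.equivFin ⟨Z, hZ⟩).isLt
    · omega
  have hsIdx_inj : ∀ Z₁ ∈ 𝒵, ∀ Z₂ ∈ 𝒵, sIdx Z₁ = sIdx Z₂ → Z₁ = Z₂ := by
    intro Z₁ h₁ Z₂ h₂ heq
    simp only [hsIdx_def, dif_pos h₁, dif_pos h₂] at heq
    have := 𝒵.equivFin.injective (Fin.ext heq)
    exact congrArg Subtype.val this
  set J : Finset α → Finset ℕ :=
    fun Z => (Finset.range n).filter (fun j => Ψ (yIdx j) ∈ Z) with hJ_def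
  set jfun : Finset α → ℕ → ℕ := fun Z a => ((J Z).sort (· ≤ ·)).getD a 0 with hjfun_def
  set rT : Fin p → ℕ := fun i => (T.filter (· < i)).card with hrT_def
  set gp : Finset α → Fin p → ℕ :=
    fun Z i => if rT i = 0 then jfun Z 0 else jfun Z (rT i - 1) + 1 with hgp_def
  set ψ : Finset α → Fin p → ℕ := fun Z i =>
    if i ∈ T then yIdx (jfun Z (rT i)) else gp Z i * B + (sIdx Z * p + i.val) with hψ_def
  set M : Finset α → Finset α := fun Z =>
    if Z ∈ 𝒵 then (Finset.univ.filter (· ∉ T)).image (fun i => Ψ (ψ Z i)) else ∅ with hM_def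
  -- facts about J
  have hJsub : ∀ Z, ∀ j ∈ J Z, j < n := by
    intro Z j hj
    have := (Finset.mem_filter.mp hj).1
    exact Finset.mem_range.mp this
  have hJim : ∀ Z ∈ 𝒵, (J Z).image (fun j => Ψ (yIdx j)) = Z := by
    intro Z hZ
    obtain ⟨hZY, hZm⟩ := Finset.mem_powersetCard.mp hZ
    apply Finset.Subset.antisymm
    · intro a ha
      obtain ⟨j, hj, rfl⟩ := Finset.mem_image.mp ha
      exact (Finset.mem_filter.mp hj).2
    · intro a ha
      have haY := hZY ha
      rw [hY_def] at haY
      obtain ⟨j, hj, rfl⟩ := Finset.mem_image.mp haY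
      exact Finset.mem_image.mpr ⟨j, Finset.mem_filter.mpr ⟨hj, ha⟩, rfl⟩
  have hJcard : ∀ Z ∈ 𝒵, (J Z).card = m := by
    intro Z hZ
    obtain ⟨hZY, hZm⟩ := Finset.mem_powersetCard.mp hZ
    have hinj : ∀ j ∈ J Z, ∀ j' ∈ J Z, Ψ (yIdx j) = Ψ (yIdx j') → j = j' := by
      intro j hj j' hj' heq
      exact hYinj j (Finset.mem_range.mpr (hJsub Z j hj)) j'
        (Finset.mem_range.mpr (hJsub Z j' hj')) heq
    calc (J Z).card = ((J Z).image (fun j => Ψ (yIdx j))).card :=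
          (Finset.card_image_of_injOn hinj).symm
      _ = Z.card := by rw [hJim Z hZ]
      _ = m := hZm
  have hjfun_mem : ∀ Z ∈ 𝒵, ∀ a, a < m → jfun Z a ∈ J Z := by
    intro Z hZ a ha
    exact getD_sort_mem (J Z) a (by rwa [hJcard Z hZ])
  have hjfun_lt_n : ∀ Z ∈ 𝒵, ∀ a, a < m → jfun Z a < n := by
    intro Z hZ a ha
    exact hJsub Z _ (hjfun_mem Z hZ a ha)
  have hjfun_smono : ∀ Z ∈ 𝒵, ∀ a b, a < b → b < m → jfun Z a < jfun Z b := by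
    intro Z hZ a b hab hb
    exact getD_sort_strictMono (J Z) hab (by rwa [hJcard Z hZ])
  have hjfun_mono : ∀ Z ∈ 𝒵, ∀ a b, a ≤ b → b < m → jfun Z a ≤ jfun Z b := by
    intro Z hZ a b hab hb
    exact getD_sort_mono (J Z) hab (by rwa [hJcard Z hZ])
  -- facts about rT
  have hrT_le : ∀ i, rT i ≤ m := by
    intro i
    simp only [hrT_def, ← hTcard]
    exact Finset.card_le_card (Finset.filter_subset _ _)
  have hrT_ltm : ∀ i ∈ T, rT i < m := by
    intro i hi
    have hsub : T.filter (· < i) ⊆ T.erase i := by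
      intro x hx
      rcases Finset.mem_filter.mp hx with ⟨h1, h2⟩
      exact Finset.mem_erase.mpr ⟨ne_of_lt h2, h1⟩
    have := Finset.card_le_card hsub
    rw [Finset.card_erase_of_mem hi, hTcard] at this
    simp only [hrT_def]
    omega
  have hrT_mono : ∀ i i' : Fin p, i ≤ i' → rT i ≤ rT i' := by
    intro i i' h
    apply Finset.card_le_card
    intro x hx
    rcases Finset.mem_filter.mp hx with ⟨h1, h2⟩
    exact Finset.mem_filter.mpr ⟨h1, lt_of_lt_of_le h2 h⟩
  have hrT_succ_le : ∀ i i' : Fin p, i ∈ T → i < i' → rT i + 1 ≤ rT i' := by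
    intro i i' hi h
    have hsub : insert i (T.filter (· < i)) ⊆ T.filter (· < i') := by
      intro x hx
      rcases Finset.mem_insert.mp hx with rfl | hx
      · exact Finset.mem_filter.mpr ⟨hi, h⟩
      · rcases Finset.mem_filter.mp hx with ⟨h1, h2⟩
        exact Finset.mem_filter.mpr ⟨h1, lt_trans h2 h⟩
    have hins : (insert i (T.filter (· < i))).card = rT i + 1 := by
      rw [Finset.card_insert_of_notMem]
      intro hmem
      exact absurd (Finset.mem_filter.mp hmem).2 (lt_irrefl i)
    calc rT i + 1 = (insert i (T.filter (· < i))).card := hins.symm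
      _ ≤ (T.filter (· < i')).card := Finset.card_le_card hsub
  have hQpB : Q * p < B := by rw [hB_def]; omega
  -- gp and slot bounds
  have hgp_le : ∀ Z ∈ 𝒵, ∀ i : Fin p, gp Z i ≤ n := by
    intro Z hZ i
    simp only [hgp_def]
    split
    · exact le_of_lt (hjfun_lt_n Z hZ 0 hm)
    · have h1 : rT i ≤ m := hrT_le i
      have h2 : jfun Z (rT i - 1) < n := hjfun_lt_n Z hZ _ (by omega)
      omega
  have hslot : ∀ Z, ∀ i : Fin p, sIdx Z * p + i.val < Q * p := by
    intro Z i
    have h1 : sIdx Z + 1 ≤ Q := hsIdx_lt Z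
    have h2 : (sIdx Z + 1) * p ≤ Q * p := Nat.mul_le_mul_right p h1
    have h3 : i.val < p := i.isLt
    calc sIdx Z * p + i.val < sIdx Z * p + p := by omega
      _ = (sIdx Z + 1) * p := by ring
      _ ≤ Q * p := h2
  have hψT : ∀ Z, ∀ i ∈ T, ψ Z i = yIdx (jfun Z (rT i)) := by
    intro Z i hi; simp only [hψ_def, if_pos hi]
  have hψF : ∀ Z, ∀ i ∉ T, ψ Z i = gp Z i * B + (sIdx Z * p + i.val) := by
    intro Z i hi; simp only [hψ_def, if_neg hi]
  have hyIdx_eq : ∀ j, yIdx j = j * B + Q * p := fun j => rfl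
  have hψ_lt : ∀ Z ∈ 𝒵, ∀ i : Fin p, ψ Z i < N₀ := by
    intro Z hZ i
    by_cases hiT : i ∈ T
    · rw [hψT Z i hiT]
      exact hyIdx_lt _ (hjfun_lt_n Z hZ _ (hrT_ltm i hiT))
    · rw [hψF Z i hiT]
      have h1 : gp Z i * B ≤ n * B := Nat.mul_le_mul_right B (hgp_le Z hZ i)
      have h2 := hslot Z i
      rw [hN₀_def]
      omega
  have hψ_mono : ∀ Z ∈ 𝒵, StrictMono (ψ Z) := by
    intro Z hZ i i' hii
    have hrmono : rT i ≤ rT i' := hrT_mono i i' (le_of_lt hii)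
    by_cases hiT : i ∈ T <;> by_cases hi'T : i' ∈ T
    · -- both in T
      have h1 : rT i + 1 ≤ rT i' := hrT_succ_le i i' hiT hii
      have hm' : rT i' < m := hrT_ltm i' hi'T
      rw [hψT Z i hiT, hψT Z i' hi'T]
      exact hyIdx_mono _ _ (hjfun_smono Z hZ _ _ (by omega) hm')
    · -- i ∈ T, i' ∉ T
      have h1 : rT i + 1 ≤ rT i' := hrT_succ_le i i' hiT hii
      have h1' : rT i' ≤ m := hrT_le i'
      have hgp' : gp Z i' = jfun Z (rT i' - 1) + 1 := by
        simp only [hgp_def]; rw [if_neg (by omega)]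
      have hle : jfun Z (rT i) ≤ jfun Z (rT i' - 1) :=
        hjfun_mono Z hZ _ _ (by omega) (by omega)
      rw [hψT Z i hiT, hψF Z i' hi'T, hyIdx_eq]
      have h2 : (jfun Z (rT i) + 1) * B ≤ gp Z i' * B :=
        Nat.mul_le_mul_right B (by omega)
      have h3 : jfun Z (rT i) * B + Q * p < (jfun Z (rT i) + 1) * B := by
        rw [Nat.succ_mul]; omega
      omega
    · -- i ∉ T, i' ∈ T
      have hr'm : rT i' < m := hrT_ltm i' hi'T
      have hgple : gp Z i ≤ jfun Z (rT i') := by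
        simp only [hgp_def]
        split
        · exact hjfun_mono Z hZ 0 _ (Nat.zero_le _) hr'm
        · rename_i hne
          exact Nat.succ_le_of_lt (hjfun_smono Z hZ _ _ (by omega) hr'm)
      rw [hψF Z i hiT, hψT Z i' hi'T, hyIdx_eq]
      have h1 : gp Z i * B ≤ jfun Z (rT i') * B := Nat.mul_le_mul_right B hgple
      have h2 := hslot Z i
      omega
    · -- both not in T
      have hgpmono : gp Z i ≤ gp Z i' := by
        simp only [hgp_def]
        by_cases h0 : rT i = 0
        · rw [if_pos h0]
          by_cases h0' : rT i' = 0
          · rw [if_pos h0']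
          · rw [if_neg h0']
            have : jfun Z 0 ≤ jfun Z (rT i' - 1) :=
              hjfun_mono Z hZ 0 _ (Nat.zero_le _) (by have := hrT_le i'; omega)
            omega
        · have h0' : rT i' ≠ 0 := by omega
          rw [if_neg h0, if_neg h0']
          have : jfun Z (rT i - 1) ≤ jfun Z (rT i' - 1) :=
            hjfun_mono Z hZ _ _ (by omega) (by have := hrT_le i'; omega)
          omega
      rw [hψF Z i hiT, hψF Z i' hi'T]
      have hvv : i.val < i'.val := hii
      rcases eq_or_lt_of_le hgpmono with heq | hlt
      · rw [heq]; omega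
      · have h2 : (gp Z i + 1) * B ≤ gp Z i' * B := Nat.mul_le_mul_right B (by omega)
        have h3 := hslot Z i
        have h4 := hslot Z i'
        rw [Nat.succ_mul] at h2
        omega
  have hf_smono : ∀ Z ∈ 𝒵, StrictMono (fun i : Fin p => Ψ (ψ Z i)) :=
    fun Z hZ i i' h => hΨlt _ _ (hψ_mono Z hZ h) (hψ_lt Z hZ i')
  have hMval : ∀ Z ∈ 𝒵, M Z = (Finset.univ.filter (· ∉ T)).image (fun i => Ψ (ψ Z i)) := by
    intro Z hZ; simp only [hM_def, if_pos hZ]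
  have himT : ∀ Z ∈ 𝒵, (Finset.univ.filter (· ∈ T)).image (fun i => Ψ (ψ Z i)) = Z := by
    intro Z hZ
    have hZm : Z.card = m := (Finset.mem_powersetCard.mp hZ).2
    have hsub : (Finset.univ.filter (· ∈ T)).image (fun i => Ψ (ψ Z i)) ⊆ Z := by
      intro a ha
      obtain ⟨i, hi, rfl⟩ := Finset.mem_image.mp ha
      have hiT : i ∈ T := (Finset.mem_filter.mp hi).2
      rw [hψT Z i hiT]
      have hjm : jfun Z (rT i) ∈ J Z := hjfun_mem Z hZ _ (hrT_ltm i hiT)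
      exact (Finset.mem_filter.mp hjm).2
    have hfT : Finset.univ.filter (· ∈ T) = T := by
      ext i; simp
    have hcard : ((Finset.univ.filter (· ∈ T)).image (fun i => Ψ (ψ Z i))).card = m := by
      rw [Finset.card_image_of_injOn (Set.InjOn.mono (fun x _ => trivial)
        (hf_smono Z hZ).injective.injOn), hfT, hTcard]
    exact Finset.eq_of_subset_of_card_le hsub (by rw [hcard, hZm])
  have hPdecomp : ∀ Z ∈ 𝒵, Z ∪ M Z = Finset.univ.image (fun i => Ψ (ψ Z i)) := by
    intro Z hZ
    rw [hMval Z hZ]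
    apply Finset.Subset.antisymm
    · intro a ha
      rcases Finset.mem_union.mp ha with h | h
      · rw [← himT Z hZ] at h
        obtain ⟨i, _, rfl⟩ := Finset.mem_image.mp h
        exact Finset.mem_image.mpr ⟨i, Finset.mem_univ i, rfl⟩
      · obtain ⟨i, _, rfl⟩ := Finset.mem_image.mp h
        exact Finset.mem_image.mpr ⟨i, Finset.mem_univ i, rfl⟩
    · intro a ha
      obtain ⟨i, _, rfl⟩ := Finset.mem_image.mp ha
      by_cases hiT : i ∈ T
      · have hmem : Ψ (ψ Z i) ∈ (Finset.univ.filter (· ∈ T)).image (fun i => Ψ (ψ Z i)) :=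
          Finset.mem_image.mpr ⟨i, Finset.mem_filter.mpr ⟨Finset.mem_univ i, hiT⟩, rfl⟩
        rw [himT Z hZ] at hmem
        exact Finset.mem_union.mpr (Or.inl hmem)
      · exact Finset.mem_union.mpr (Or.inr (Finset.mem_image.mpr
          ⟨i, Finset.mem_filter.mpr ⟨Finset.mem_univ i, hiT⟩, rfl⟩))
  have hPsubY₀ : ∀ Z : Finset α, Finset.univ.image (fun i : Fin p => Ψ (ψ Z i)) ⊆ Y₀ := by
    intro Z a ha
    obtain ⟨i, _, rfl⟩ := Finset.mem_image.mp ha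
    exact hΨmem _
  have hPcard : ∀ Z ∈ 𝒵, (Finset.univ.image (fun i : Fin p => Ψ (ψ Z i))).card = p := by
    intro Z hZ
    rw [Finset.card_image_of_injOn (hf_smono Z hZ).injective.injOn, Finset.card_univ,
      Fintype.card_fin]
  have hmodyIdx : ∀ j, yIdx j % B = Q * p := by
    intro j
    rw [hyIdx_eq, Nat.add_comm, Nat.add_mul_mod_self_right, Nat.mod_eq_of_lt hQpB]
  have hmodF : ∀ Z, ∀ i ∉ T, ψ Z i % B = sIdx Z * p + i.val := by
    intro Z i hi
    rw [hψF Z i hi, Nat.add_comm, Nat.add_mul_mod_self_right]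
    exact Nat.mod_eq_of_lt (lt_trans (hslot Z i) hQpB)
  have hMY₀ : ∀ Z ∈ 𝒵, M Z ⊆ Y₀ := by
    intro Z hZ a ha
    rw [hMval Z hZ] at ha
    obtain ⟨i, _, rfl⟩ := Finset.mem_image.mp ha
    exact hΨmem _
  have hMnotY : ∀ Z ∈ 𝒵, ∀ a ∈ M Z, a ∉ Y := by
    intro Z hZ a ha haY
    rw [hMval Z hZ] at ha
    obtain ⟨i, hi, rfl⟩ := Finset.mem_image.mp ha
    have hiT : i ∉ T := (Finset.mem_filter.mp hi).2
    rw [hY_def] at haY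
    obtain ⟨j, hj, heq⟩ := Finset.mem_image.mp haY
    rw [Finset.mem_range] at hj
    have heq2 : yIdx j = ψ Z i :=
      hΨinj _ _ (hyIdx_lt j hj) (hψ_lt Z hZ i) heq
    have h1 := hmodyIdx j
    have h2 := hmodF Z i hiT
    rw [heq2] at h1
    rw [h1] at h2
    exact absurd h2.symm (Nat.ne_of_lt (hslot Z i))
  have hdivp : ∀ s : ℕ, ∀ i : Fin p, (s * p + i.val) / p = s := by
    intro s i
    rw [Nat.add_comm, Nat.add_mul_div_right _ _ (by omega : 0 < p),
      Nat.div_eq_of_lt i.isLt]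
    omega
  refine ⟨Y, hYsub, hYcard, M, ?_, ?_, ?_⟩
  · -- M Z ⊆ X \ Y
    intro Z hZY hZm a ha
    have hZ : Z ∈ 𝒵 := Finset.mem_powersetCard.mpr ⟨hZY, hZm⟩
    exact Finset.mem_sdiff.mpr ⟨hY₀sub (hMY₀ Z hZ ha), hMnotY Z hZ a ha⟩
  · -- pairwise disjoint
    intro Z₁ h₁Y Z₂ h₂Y hc₁ hc₂ hne
    have hZ₁ : Z₁ ∈ 𝒵 := Finset.mem_powersetCard.mpr ⟨h₁Y, hc₁⟩
    have hZ₂ : Z₂ ∈ 𝒵 := Finset.mem_powersetCard.mpr ⟨h₂Y, hc₂⟩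
    rw [Finset.disjoint_left]
    intro a ha₁ ha₂
    rw [hMval _ hZ₁] at ha₁
    rw [hMval _ hZ₂] at ha₂
    obtain ⟨i₁, hi₁, rfl⟩ := Finset.mem_image.mp ha₁
    obtain ⟨i₂, hi₂, heq⟩ := Finset.mem_image.mp ha₂
    have hT₁ : i₁ ∉ T := (Finset.mem_filter.mp hi₁).2
    have hT₂ : i₂ ∉ T := (Finset.mem_filter.mp hi₂).2
    have heq2 : ψ Z₂ i₂ = ψ Z₁ i₁ :=
      hΨinj _ _ (hψ_lt Z₂ hZ₂ i₂) (hψ_lt Z₁ hZ₁ i₁) heq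
    have hmod : sIdx Z₂ * p + i₂.val = sIdx Z₁ * p + i₁.val := by
      have h1 := hmodF Z₂ i₂ hT₂
      have h2 := hmodF Z₁ i₁ hT₁
      rw [← h1, ← h2, heq2]
    have hs : sIdx Z₂ = sIdx Z₁ := by
      have := congrArg (· / p) hmod
      simpa [hdivp] using this
    exact hne (hsIdx_inj Z₁ hZ₁ Z₂ hZ₂ hs.symm)
  · -- monochromatic
    intro Z hZY hZm e₁ he₁ e₂ he₂ hce₁ hce₂
    have hZ : Z ∈ 𝒵 := Finset.mem_powersetCard.mpr ⟨hZY, hZm⟩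
    rw [hPdecomp Z hZ]
    set P : Finset α := Finset.univ.image (fun i : Fin p => Ψ (ψ Z i)) with hP_def
    have hZMP : Z ∪ M Z = P := by rw [hP_def]; exact hPdecomp Z hZ
    have hZP : Z ⊆ P := by
      rw [← hZMP]; exact Finset.subset_union_left
    have hrank : ∀ i : Fin p, rk P (Ψ (ψ Z i)) = i.val := by
      intro i
      simp only [hrk_def, hP_def]
      exact rank_lemma (fun i : Fin p => Ψ (ψ Z i)) (hf_smono Z hZ) i
    have hPcard' : P.card = p := by rw [hP_def]; exact hPcard Z hZ
    have hPsub' : P ⊆ Y₀ := by rw [hP_def]; exact hPsubY₀ Z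
    have hχP : χ P = v := by rw [hv_def]; exact hmono P hPsub' hPcard' P₀ hP₀sub hP₀card
    have hrk_lt : ∀ a ∈ P, rk P a < p := by
      intro a ha
      have hsub : P.filter (· < a) ⊆ P.erase a := by
        intro x hx
        rcases Finset.mem_filter.mp hx with ⟨h1, h2⟩
        exact Finset.mem_erase.mpr ⟨ne_of_lt h2, h1⟩
      have := Finset.card_le_card hsub
      rw [Finset.card_erase_of_mem ha, hPcard'] at this
      have : (P.filter (· < a)).card ≤ p - 1 := this
      simp only [hrk_def]
      omega
    have hZmemP : ∀ a ∈ Z, ∃ i ∈ T, Ψ (ψ Z i) = a := by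
      intro a ha
      have ha2 : a ∈ (Finset.univ.filter (· ∈ T)).image (fun i => Ψ (ψ Z i)) := by
        rw [himT Z hZ]; exact ha
      obtain ⟨i, hi, heq⟩ := Finset.mem_image.mp ha2
      exact ⟨i, (Finset.mem_filter.mp hi).2, heq⟩
    have key : ∀ e, e ⊆ Z → e.card = k → ∃ S : Finset (Fin p), S ⊆ T ∧ S.card = k ∧
        ρ P e = v S := by
      intro e heZ hek
      have heP : e ⊆ P := heZ.trans hZP
      refine ⟨Finset.univ.filter (fun i : Fin p => i.val ∈ e.image (rk P)), ?_, ?_, ?_⟩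
      · intro i hi
        have hex := (Finset.mem_filter.mp hi).2
        obtain ⟨a, hae, hrka⟩ := Finset.mem_image.mp hex
        obtain ⟨t, htT, hfa⟩ := hZmemP a (heZ hae)
        rw [← hfa, hrank t] at hrka
        have : i = t := Fin.ext hrka.symm
        rw [this]; exact htT
      · have h_img : (Finset.univ.filter (fun i : Fin p => i.val ∈ e.image (rk P))).image
            Fin.val = e.image (rk P) := by
          ext x
          constructor
          · intro hx
            obtain ⟨i, hiS, rfl⟩ := Finset.mem_image.mp hx
            exact (Finset.mem_filter.mp hiS).2
          · intro hx
            obtain ⟨a, hae, hrka⟩ := Finset.mem_image.mp hx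
            have hxp : x < p := hrka ▸ hrk_lt a (heP hae)
            exact Finset.mem_image.mpr ⟨⟨x, hxp⟩,
              Finset.mem_filter.mpr ⟨Finset.mem_univ _, hx⟩, rfl⟩
        have h1 := Finset.card_image_of_injective
          (Finset.univ.filter (fun i : Fin p => i.val ∈ e.image (rk P))) Fin.val_injective
        rw [h_img] at h1
        have h2 : (e.image (rk P)).card = e.card := by
          apply Finset.card_image_of_injOn
          intro a ha b hb hab
          exact rk_injOn P (heP ha) (heP hb) hab
        omega
      · have h_img : (Finset.univ.filter (fun i : Fin p => i.val ∈ e.image (rk P))).image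
            Fin.val = e.image (rk P) := by
          ext x
          constructor
          · intro hx
            obtain ⟨i, hiS, rfl⟩ := Finset.mem_image.mp hx
            exact (Finset.mem_filter.mp hiS).2
          · intro hx
            obtain ⟨a, hae, hrka⟩ := Finset.mem_image.mp hx
            have hxp : x < p := hrka ▸ hrk_lt a (heP hae)
            exact Finset.mem_image.mpr ⟨⟨x, hxp⟩,
              Finset.mem_filter.mpr ⟨Finset.mem_univ _, hx⟩, rfl⟩
        have hχ1 : χ P (Finset.univ.filter (fun i : Fin p => i.val ∈ e.image (rk P))) =
            ρ P (P.filter (fun a => rk P a ∈ e.image (rk P))) := by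
          simp only [hχ_def]
          rw [h_img]
        have hfe : P.filter (fun a => rk P a ∈ e.image (rk P)) = e := by
          apply Finset.Subset.antisymm
          · intro a ha
            rcases Finset.mem_filter.mp ha with ⟨haP, hmem⟩
            obtain ⟨b, hbe, hrkb⟩ := Finset.mem_image.mp hmem
            rw [← rk_injOn P (heP hbe) haP hrkb]
            exact hbe
          · intro a ha
            exact Finset.mem_filter.mpr ⟨heP ha, Finset.mem_image_of_mem _ ha⟩
        rw [hfe] at hχ1
        rw [← hχ1, hχP]
    obtain ⟨S₁, hS₁T, hS₁c, hre₁⟩ := key e₁ he₁ hce₁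
    obtain ⟨S₂, hS₂T, hS₂c, hre₂⟩ := key e₂ he₂ hce₂
    rw [hre₁, hre₂]
    exact hTmono S₁ hS₁T hS₁c S₂ hS₂T hS₂c
end

section
/- Quantitative bound in the Ramsey-type selection theorem: with r = R_k(m;c) the classical k-uniform Ramsey number guaranteeing a monochromatic m-set in any c-coloring of k-subsets of an r-set, the selection constant R_k(n;m;c) can be taken to be the classical r-uniform Ramsey number R_r(n + C(n,m)·(r−m); C(r,m)), i.e., any set X of this size admits the conclusion of the selection theorem. -/
/-- `IsRamseyNum N k n c` : any `c`-coloring of the `k`-element subsets of a set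
of at least `N` natural numbers admits a monochromatic subset of size `n`
(the defining property of the classical hypergraph Ramsey number `R_k(n;c)`). -/
def IsRamseyNum (N k n c : ℕ) : Prop :=
  ∀ (X : Finset ℕ) (ρ : Finset ℕ → Fin c), N ≤ X.card →
    ∃ Y ⊆ X, Y.card = n ∧
      ∀ e₁ ⊆ Y, ∀ e₂ ⊆ Y, e₁.card = k → e₂.card = k → ρ e₁ = ρ e₂

open Finset

namespace RamseySel


/-- rank of `v` inside `V`. -/
def rnk (V : Finset ℕ) (v : ℕ) : ℕ := (V.filter (· < v)).card

lemma rnk_lt {V : Finset ℕ} {v : ℕ} (hv : v ∈ V) : rnk V v < V.card := by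
  apply card_lt_card
  rw [Finset.ssubset_iff_of_subset (filter_subset _ _)]
  exact ⟨v, hv, by simp⟩

lemma rnk_strict {V : Finset ℕ} {v w : ℕ} (hv : v ∈ V) (hvw : v < w) :
    rnk V v < rnk V w := by
  apply card_lt_card
  have hsub : V.filter (· < v) ⊆ V.filter (· < w) := by
    intro x hx; simp only [mem_filter] at hx ⊢; exact ⟨hx.1, hx.2.trans hvw⟩
  rw [Finset.ssubset_iff_of_subset hsub]
  exact ⟨v, by simp [hv, hvw], by simp⟩

lemma rnk_injOn {V : Finset ℕ} {v w : ℕ} (hv : v ∈ V) (hw : w ∈ V)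
    (h : rnk V v = rnk V w) : v = w := by
  rcases lt_trichotomy v w with h1 | h1 | h1
  · exact absurd h (rnk_strict hv h1).ne
  · exact h1
  · exact absurd h.symm (rnk_strict hw h1).ne

/-- pattern of `Z` inside `V`. -/
def patt (V Z : Finset ℕ) : Finset ℕ := Z.image (rnk V)

lemma patt_inj {V Z₁ Z₂ : Finset ℕ} (h1 : Z₁ ⊆ V) (h2 : Z₂ ⊆ V)
    (h : patt V Z₁ = patt V Z₂) : Z₁ = Z₂ := by
  ext a
  constructor <;> intro ha
  · have : rnk V a ∈ patt V Z₂ := h ▸ mem_image_of_mem _ ha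
    obtain ⟨b, hb, hba⟩ := mem_image.1 this
    rwa [← rnk_injOn (h2 hb) (h1 ha) hba]
  · have : rnk V a ∈ patt V Z₁ := h ▸ mem_image_of_mem _ ha
    obtain ⟨b, hb, hba⟩ := mem_image.1 this
    rwa [← rnk_injOn (h1 hb) (h2 ha) hba]

lemma patt_mem {V Z : Finset ℕ} {r m : ℕ} (hZV : Z ⊆ V) (hV : V.card = r)
    (hZ : Z.card = m) : patt V Z ∈ (range r).powersetCard m := by
  rw [mem_powersetCard]
  constructor
  · intro x hx
    obtain ⟨z, hz, rfl⟩ := mem_image.1 hx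
    exact mem_range.2 (hV ▸ rnk_lt (hZV hz))
  · rw [patt, card_image_of_injOn (fun a ha b hb => rnk_injOn (hZV ha) (hZV hb)), hZ]



lemma card_filter_fin_lt {t c : ℕ} (h : c ≤ t) :
    ((univ : Finset (Fin t)).filter fun i : Fin t => (i : ℕ) < c).card = c := by
  have himg : ((univ : Finset (Fin t)).filter fun i : Fin t => (i : ℕ) < c).image Fin.val
      = range c := by
    ext x
    simp only [mem_image, mem_filter, mem_univ, true_and, mem_range]
    constructor
    · rintro ⟨i, hi, rfl⟩; exact hi
    · intro hx; exact ⟨⟨x, lt_of_lt_of_le hx h⟩, hx, rfl⟩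
  rw [← card_image_of_injective _ Fin.val_injective, himg, card_range]

lemma image_univ_orderEmbOfFin {α : Type*} [LinearOrder α] [DecidableEq α] {S : Finset α} {m : ℕ}
    (hS : S.card = m) : (univ : Finset (Fin m)).image (S.orderEmbOfFin hS) = S := by
  ext x
  simp only [mem_image, mem_univ, true_and]
  constructor
  · rintro ⟨b, rfl⟩; exact orderEmbOfFin_mem S hS b
  · intro hx
    have : x ∈ Set.range (S.orderEmbOfFin hS) := by
      rw [range_orderEmbOfFin]; exact hx
    obtain ⟨b, rfl⟩ := this
    exact ⟨b, rfl⟩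

lemma filter_lt_orderEmbOfFin {α : Type*} [LinearOrder α] {S : Finset α} {m : ℕ}
    (hS : S.card = m) (a : Fin m) :
    (S.filter (· < S.orderEmbOfFin hS a)).card = a := by
  have himg : S.filter (· < S.orderEmbOfFin hS a)
      = ((univ : Finset (Fin m)).filter fun b => b < a).image (S.orderEmbOfFin hS) := by
    ext x
    simp only [mem_filter, mem_image, mem_univ, true_and]
    constructor
    · rintro ⟨hxS, hxlt⟩
      have hx : x ∈ Set.range (S.orderEmbOfFin hS) := by
        rw [range_orderEmbOfFin]; exact hxS
      obtain ⟨b, rfl⟩ := hx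
      exact ⟨b, (OrderEmbedding.lt_iff_lt _).1 hxlt, rfl⟩
    · rintro ⟨b, hb, rfl⟩
      exact ⟨orderEmbOfFin_mem S hS b, (OrderEmbedding.lt_iff_lt _).2 hb⟩
  rw [himg, card_image_of_injective _ (S.orderEmbOfFin hS).injective]
  have : ((univ : Finset (Fin m)).filter fun b => b < a)
      = ((univ : Finset (Fin m)).filter fun b : Fin m => (b : ℕ) < (a : ℕ)) := by
    apply filter_congr; intro b _; exact Fin.lt_def
  rw [this, card_filter_fin_lt a.isLt.le]

lemma orderEmbOfFin_add_le {S : Finset ℕ} {m : ℕ}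
    (hS : S.card = m) (a b : Fin m) (hab : a ≤ b) :
    S.orderEmbOfFin hS a + ((b : ℕ) - a) ≤ S.orderEmbOfFin hS b := by
  suffices H : ∀ k (a b : Fin m), (b : ℕ) = (a : ℕ) + k →
      S.orderEmbOfFin hS a + k ≤ S.orderEmbOfFin hS b by
    exact H ((b : ℕ) - a) a b (by omega)
  intro k
  induction k with
  | zero => intro a b hab; have : a = b := Fin.ext (by omega); simp [this]
  | succ k ih =>
    intro a b hab
    have hb' : (a : ℕ) + k < m := by have := b.isLt; omega
    have h1 := ih a ⟨(a : ℕ) + k, hb'⟩ rfl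
    have h2 : S.orderEmbOfFin hS ⟨(a : ℕ) + k, hb'⟩ < S.orderEmbOfFin hS b := by
      apply (S.orderEmbOfFin hS).strictMono
      rw [Fin.lt_def]; simp; omega
    omega

lemma key_split {B a b i j : ℕ} (hi : i < B) (hj : j < B)
    (h : a * B + i = b * B + j) : a = b ∧ i = j := by
  have h1 : (a * B + i) % B = i := by rw [add_comm, Nat.add_mul_mod_self_right, Nat.mod_eq_of_lt hi]
  have h2 : (b * B + j) % B = j := by rw [add_comm, Nat.add_mul_mod_self_right, Nat.mod_eq_of_lt hj]
  have hij : i = j := by rw [← h1, ← h2, h]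
  refine ⟨?_, hij⟩
  have hB : 0 < B := by omega
  have : a * B = b * B := by omega
  exact Nat.eq_of_mul_eq_mul_right hB this

lemma lt_key {B a b i : ℕ} (hi : i < B) : a * B + i < b * B ↔ a < b := by
  constructor
  · intro h
    by_contra hab
    push_neg at hab
    have : b * B ≤ a * B := Nat.mul_le_mul_right _ hab
    omega
  · intro h
    have : a + 1 ≤ b := h
    have := Nat.mul_le_mul_right B this
    have hh : a * B + B ≤ b * B := by rw [← Nat.succ_mul]; exact this
    omega



/-- number of "threshold" indices passed by spare slot `i`. -/
def lab (p : Finset ℕ) {m : ℕ} (hp : p.card = m) (i : ℕ) : ℕ :=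
  ((univ : Finset (Fin m)).filter fun b : Fin m => p.orderEmbOfFin hp b ≤ i + b).card

lemma lab_le {m : ℕ} {p : Finset ℕ} (hp : p.card = m) (i : ℕ) : lab p hp i ≤ m := by
  have := card_filter_le (univ : Finset (Fin m))
    (fun b : Fin m => p.orderEmbOfFin hp b ≤ i + b)
  simpa [lab] using this

lemma mem_lab_iff {m : ℕ} {p : Finset ℕ} (hp : p.card = m) (i : ℕ) (a : Fin m) :
    p.orderEmbOfFin hp a ≤ i + a ↔ (a : ℕ) < lab p hp i := by
  constructor
  · intro h
    have hsub : ((univ : Finset (Fin m)).filter fun b : Fin m => (b : ℕ) < (a : ℕ) + 1)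
        ⊆ ((univ : Finset (Fin m)).filter fun b : Fin m => p.orderEmbOfFin hp b ≤ i + b) := by
      intro b hb
      simp only [mem_filter, mem_univ, true_and] at hb ⊢
      have hba : b ≤ a := by rw [Fin.le_def]; omega
      have := orderEmbOfFin_add_le hp b a hba
      omega
    have hc := card_le_card hsub
    rwa [card_filter_fin_lt (by have := a.isLt; omega)] at hc
  · intro h
    by_contra hcon
    have hsub : ((univ : Finset (Fin m)).filter fun b : Fin m => p.orderEmbOfFin hp b ≤ i + b)
        ⊆ ((univ : Finset (Fin m)).filter fun b : Fin m => (b : ℕ) < (a : ℕ)) := by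
      intro b hb
      simp only [mem_filter, mem_univ, true_and] at hb ⊢
      by_contra hba
      push_neg at hba
      have hab : a ≤ b := by rw [Fin.le_def]; omega
      have := orderEmbOfFin_add_le hp a b hab
      omega
    have hc := card_le_card hsub
    rw [card_filter_fin_lt a.isLt.le] at hc
    have : lab p hp i ≤ (a : ℕ) := hc
    omega

lemma lab_le_iff {m : ℕ} {p : Finset ℕ} (hp : p.card = m) (i : ℕ) (a : Fin m) :
    lab p hp i ≤ (a : ℕ) ↔ (i : ℕ) + (a : ℕ) < p.orderEmbOfFin hp a := by
  rw [← not_lt, ← mem_lab_iff hp i a]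
  omega

/-- Gap index of spare slot `i` relative to index set `S`. -/
def Gp (p : Finset ℕ) {m : ℕ} (hp : p.card = m) {n : ℕ} (S : Finset (Fin n))
    (hS : S.card = m) (hm : 0 < m) (i : ℕ) : ℕ :=
  if h : 0 < lab p hp i then
    (S.orderEmbOfFin hS ⟨lab p hp i - 1, by have := lab_le hp i; omega⟩ : ℕ) + 1
  else (S.orderEmbOfFin hS ⟨0, hm⟩ : ℕ)

lemma Gp_le_iff {m : ℕ} {p : Finset ℕ} (hp : p.card = m) {n : ℕ} (S : Finset (Fin n)) (hS : S.card = m) (hm : 0 < m)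
    (i : ℕ) (a : Fin m) :
    Gp p hp S hS hm i ≤ (S.orderEmbOfFin hS a : ℕ) ↔ lab p hp i ≤ (a : ℕ) := by
  unfold Gp
  split_ifs with h
  · constructor
    · intro hle
      have hlt : S.orderEmbOfFin hS ⟨lab p hp i - 1, by have := lab_le hp i; omega⟩
          < S.orderEmbOfFin hS a := by
        rw [Fin.lt_def]; omega
      have := (OrderEmbedding.lt_iff_lt _).1 hlt
      rw [Fin.lt_def] at this
      simp only [] at this
      omega
    · intro hla
      have hlt : (⟨lab p hp i - 1, by have := lab_le hp i; omega⟩ : Fin m) < a := by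
        rw [Fin.lt_def]; simp; omega
      have := (S.orderEmbOfFin hS).strictMono hlt
      rw [Fin.lt_def] at this
      omega
  · have h0 : lab p hp i = 0 := by omega
    simp only [h0, Nat.zero_le, iff_true]
    have : (⟨0, hm⟩ : Fin m) ≤ a := by rw [Fin.le_def]; simp
    have := (S.orderEmbOfFin hS).monotone this
    rw [Fin.le_def] at this
    omega

lemma count_Gp {m : ℕ} {p : Finset ℕ} (hp : p.card = m) {n t : ℕ} (S : Finset (Fin n)) (hS : S.card = m) (hm : 0 < m)
    (a : Fin m) (hta : p.orderEmbOfFin hp a ≤ t + a) :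
    ((univ : Finset (Fin t)).filter fun i : Fin t =>
      Gp p hp S hS hm i ≤ (S.orderEmbOfFin hS a : ℕ)).card
      = p.orderEmbOfFin hp a - a := by
  have h1 : ((univ : Finset (Fin t)).filter fun i : Fin t =>
      Gp p hp S hS hm i ≤ (S.orderEmbOfFin hS a : ℕ))
      = ((univ : Finset (Fin t)).filter fun i : Fin t =>
        (i : ℕ) < p.orderEmbOfFin hp a - a) := by
    apply filter_congr
    intro i _
    rw [Gp_le_iff hp S hS hm i a, lab_le_iff hp i a]
    omega
  rw [h1, card_filter_fin_lt (by omega)]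


/-! ### keys and positions -/

abbrev Idx (n m t : ℕ) := Fin n ⊕ ({S : Finset (Fin n) // S.card = m} × Fin t)

noncomputable def νn {n : ℕ} (S : Finset (Fin n)) : ℕ :=
  (Fintype.equivFin (Finset (Fin n)) S : ℕ)

lemma νn_lt {n : ℕ} (S : Finset (Fin n)) : νn S < 2 ^ n := by
  have h := (Fintype.equivFin (Finset (Fin n)) S).isLt
  simpa [νn, Fintype.card_finset, Fintype.card_fin] using h

lemma νn_inj {n : ℕ} : Function.Injective (νn (n := n)) := fun S S' h =>
  (Fintype.equivFin (Finset (Fin n))).injective (Fin.val_injective h)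

noncomputable def key {n m t : ℕ} (p : Finset ℕ) (hp : p.card = m) (hm : 0 < m)
    (x : Idx n m t) : ℕ :=
  match x with
  | Sum.inl j => (2 * (j : ℕ) + 1) * 2 ^ n * (t + 1)
  | Sum.inr z => ((2 * Gp p hp z.1.1 z.1.2 hm (z.2 : ℕ)) * 2 ^ n + νn z.1.1) * (t + 1)
      + (z.2 : ℕ)

lemma key_inl_lt {n m t : ℕ} (p : Finset ℕ) (hp : p.card = m) (hm : 0 < m)
    (j j' : Fin n) :
    key (t := t) p hp hm (Sum.inl j) < key (t := t) p hp hm (Sum.inl j') ↔ (j : ℕ) < (j' : ℕ) := by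
  simp only [key]
  have hB : 0 < t + 1 := Nat.succ_pos t
  have hA : 0 < 2 ^ n := by positivity
  rw [Nat.mul_lt_mul_right hB, Nat.mul_lt_mul_right hA]
  omega

lemma key_inr_lt_inl {n m t : ℕ} (p : Finset ℕ) (hp : p.card = m) (hm : 0 < m)
    (z : {S : Finset (Fin n) // S.card = m} × Fin t) (j : Fin n) :
    key p hp hm (Sum.inr z) < key (t := t) p hp hm (Sum.inl j) ↔
      Gp p hp z.1.1 z.1.2 hm (z.2 : ℕ) ≤ (j : ℕ) := by
  simp only [key]
  rw [lt_key (by omega : (z.2 : ℕ) < t + 1)]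
  rw [lt_key (νn_lt z.1.1)]
  omega

lemma key_inl_ne_inr {n m t : ℕ} (p : Finset ℕ) (hp : p.card = m) (hm : 0 < m)
    (j : Fin n) (z : {S : Finset (Fin n) // S.card = m} × Fin t) :
    key (t := t) p hp hm (Sum.inl j) ≠ key p hp hm (Sum.inr z) := by
  simp only [key]
  intro h
  have h' : (2 * (j : ℕ) + 1) * 2 ^ n * (t + 1) + 0
      = ((2 * Gp p hp z.1.1 z.1.2 hm (z.2 : ℕ)) * 2 ^ n + νn z.1.1) * (t + 1) + (z.2 : ℕ) := by
    omega
  obtain ⟨h1, _⟩ := key_split (Nat.succ_pos t) (by omega : (z.2 : ℕ) < t + 1) h'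
  have h'' : (2 * (j : ℕ) + 1) * 2 ^ n + 0
      = (2 * Gp p hp z.1.1 z.1.2 hm (z.2 : ℕ)) * 2 ^ n + νn z.1.1 := by omega
  obtain ⟨h2, h3⟩ := key_split (by positivity : 0 < 2 ^ n) (νn_lt z.1.1) h''
  omega

lemma key_inj {n m t : ℕ} (p : Finset ℕ) (hp : p.card = m) (hm : 0 < m) :
    Function.Injective (key (n := n) (t := t) p hp hm) := by
  intro x y h
  match x, y with
  | Sum.inl j, Sum.inl j' =>
    have h1 := key_inl_lt (t := t) p hp hm j j'
    have h2 := key_inl_lt (t := t) p hp hm j' j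
    have : (j : ℕ) = (j' : ℕ) := by
      rw [h] at h1; rw [← h] at h2; omega
    exact congrArg Sum.inl (Fin.val_injective this)
  | Sum.inl j, Sum.inr z => exact absurd h (key_inl_ne_inr p hp hm j z)
  | Sum.inr z, Sum.inl j => exact absurd h.symm (key_inl_ne_inr p hp hm j z)
  | Sum.inr z, Sum.inr z' =>
    simp only [key] at h
    obtain ⟨h1, h2⟩ := key_split (by omega : (z.2 : ℕ) < t + 1)
      (by omega : (z'.2 : ℕ) < t + 1) h
    obtain ⟨h3, h4⟩ := key_split (νn_lt z.1.1) (νn_lt z'.1.1) h1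
    have hS : z.1 = z'.1 := Subtype.ext (νn_inj h4)
    have hi : z.2 = z'.2 := Fin.val_injective h2
    have : z = z' := Prod.ext hS hi
    rw [this]

noncomputable def posn {n m t : ℕ} (p : Finset ℕ) (hp : p.card = m) (hm : 0 < m)
    (x : Idx n m t) : ℕ :=
  ((univ : Finset (Idx n m t)).filter fun z => key p hp hm z < key p hp hm x).card

lemma posn_lt {n m t : ℕ} (p : Finset ℕ) (hp : p.card = m) (hm : 0 < m)
    (x : Idx n m t) : posn p hp hm x < n + n.choose m * t := by
  have hIcard : Fintype.card (Idx n m t) = n + n.choose m * t := by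
    simp [Idx, Fintype.card_finset_len]
  have hss : ((univ : Finset (Idx n m t)).filter fun z => key p hp hm z < key p hp hm x)
      ⊂ univ := by
    rw [Finset.ssubset_iff_of_subset (subset_univ _)]
    exact ⟨x, mem_univ x, by simp⟩
  have := card_lt_card hss
  rwa [card_univ, hIcard] at this

lemma posn_lt_iff {n m t : ℕ} (p : Finset ℕ) (hp : p.card = m) (hm : 0 < m)
    (x y : Idx n m t) :
    posn p hp hm x < posn p hp hm y ↔ key p hp hm x < key p hp hm y := by
  have mono : ∀ u v : Idx n m t, key p hp hm u < key p hp hm v →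
      posn p hp hm u < posn p hp hm v := by
    intro u v huv
    apply card_lt_card
    rw [Finset.ssubset_iff_of_subset]
    · exact ⟨u, by simp [huv], by simp⟩
    · intro z hz
      simp only [mem_filter, mem_univ, true_and] at hz ⊢
      omega
  constructor
  · intro h
    rcases lt_trichotomy (key p hp hm x) (key p hp hm y) with hc | hc | hc
    · exact hc
    · rw [key_inj p hp hm hc] at h; omega
    · have := mono _ _ hc; omega
  · exact mono x y


lemma core {n m r t : ℕ} (hm : 0 < m) (hmr : m ≤ r) (ht : t = r - m)
    {p : Finset ℕ} (hp : p.card = m) (hpr : p ⊆ range r)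
    {W : Finset ℕ} (hW : W.card = n + n.choose m * t) :
    ∃ (y : Fin n → ℕ) (sp : {S : Finset (Fin n) // S.card = m} → Fin t → ℕ),
      (∀ j, y j ∈ W) ∧ (∀ S i, sp S i ∈ W) ∧
      Function.Injective y ∧
      (∀ j S i, y j ≠ sp S i) ∧
      (∀ S S' i i', sp S i = sp S' i' → S = S' ∧ i = i') ∧
      (∀ S : {S : Finset (Fin n) // S.card = m},
        patt ((S.1.image y) ∪ (univ.image (sp S))) (S.1.image y) = p) := by
  have heiff : ∀ x z : Idx n m t,
      W.orderEmbOfFin hW ⟨posn p hp hm x, posn_lt p hp hm x⟩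
        < W.orderEmbOfFin hW ⟨posn p hp hm z, posn_lt p hp hm z⟩
      ↔ key p hp hm x < key p hp hm z := by
    intro x z
    rw [OrderEmbedding.lt_iff_lt, Fin.mk_lt_mk, posn_lt_iff]
  set e : Idx n m t → ℕ :=
    fun x => W.orderEmbOfFin hW ⟨posn p hp hm x, posn_lt p hp hm x⟩ with he
  have heinj : Function.Injective e := by
    intro x z h
    apply key_inj p hp hm
    rcases lt_trichotomy (key p hp hm x) (key p hp hm z) with hc | hc | hc
    · exact absurd h ((heiff x z).2 hc).ne
    · exact hc
    · exact absurd h.symm ((heiff z x).2 hc).ne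
  refine ⟨fun j => e (Sum.inl j), fun S i => e (Sum.inr (S, i)),
    fun j => orderEmbOfFin_mem _ _ _, fun S i => orderEmbOfFin_mem _ _ _,
    fun j j' h => Sum.inl_injective (heinj h), fun j S i h => ?_, ?_, ?_⟩
  · exact absurd (heinj h) (by simp)
  · intro S S' i i' h
    have := heinj h
    simp only [Sum.inr.injEq, Prod.mk.injEq] at this
    exact this
  · intro S
    have hpea : ∀ a : Fin m, (a : ℕ) ≤ (p.orderEmbOfFin hp) a := by
      intro a
      have := orderEmbOfFin_add_le hp ⟨0, hm⟩ a (by rw [Fin.le_def]; simp)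
      simp at this
      omega
    have hpet : ∀ a : Fin m, ((p.orderEmbOfFin hp) a : ℕ) ≤ t + a := by
      intro a
      have hlast : (p.orderEmbOfFin hp) a + ((m - 1) - (a : ℕ))
          ≤ (p.orderEmbOfFin hp) ⟨m - 1, by omega⟩ := by
        simpa using orderEmbOfFin_add_le hp a ⟨m - 1, by omega⟩
          (by rw [Fin.le_def]; simp; omega)
      have hmem : (p.orderEmbOfFin hp) ⟨m - 1, by omega⟩ ∈ range r :=
        hpr (orderEmbOfFin_mem p hp _)
      rw [mem_range] at hmem
      have := a.isLt
      omega
    set T : Finset (Idx n m t) :=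
      S.1.image Sum.inl ∪ univ.image (fun i : Fin t => Sum.inr (S, i)) with hT
    have hinrinj : Function.Injective (fun i : Fin t => (Sum.inr (S, i) : Idx n m t)) := by
      intro i i' h
      simpa using h
    have hrank : ∀ a : Fin m, rnk (T.image e) (e (Sum.inl ((S.1.orderEmbOfFin S.2) a))) = (p.orderEmbOfFin hp) a := by
      intro a
      rw [rnk, filter_image, card_image_of_injective _ heinj, hT, filter_union]
      have hdisj : Disjoint
          ((S.1.image Sum.inl).filter fun z => e z < e (Sum.inl ((S.1.orderEmbOfFin S.2) a)))
          ((univ.image (fun i : Fin t => (Sum.inr (S, i) : Idx n m t))).filter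
            fun z => e z < e (Sum.inl ((S.1.orderEmbOfFin S.2) a))) := by
        rw [Finset.disjoint_left]
        intro z hz1 hz2
        simp only [mem_filter, mem_image] at hz1 hz2
        obtain ⟨⟨j1, _, rfl⟩, -⟩ := hz1
        obtain ⟨⟨i2, _, hii⟩, -⟩ := hz2
        cases hii
      rw [card_union_of_disjoint hdisj]
      have hpart1 : ((S.1.image Sum.inl).filter fun z => e z < e (Sum.inl ((S.1.orderEmbOfFin S.2) a))).card
          = (a : ℕ) := by
        rw [filter_image, card_image_of_injective _ Sum.inl_injective]
        have hfc : S.1.filter (fun j => e (Sum.inl j) < e (Sum.inl ((S.1.orderEmbOfFin S.2) a)))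
            = S.1.filter (· < (S.1.orderEmbOfFin S.2) a) := by
          apply filter_congr
          intro j _
          rw [heiff, key_inl_lt]
          exact Fin.lt_def.symm
        rw [hfc, filter_lt_orderEmbOfFin S.2 a]
      have hpart2 : ((univ.image (fun i : Fin t => (Sum.inr (S, i) : Idx n m t))).filter
          fun z => e z < e (Sum.inl ((S.1.orderEmbOfFin S.2) a))).card = ((p.orderEmbOfFin hp) a : ℕ) - a := by
        rw [filter_image, card_image_of_injective _ hinrinj]
        have hfc : (univ : Finset (Fin t)).filter
            (fun i => e (Sum.inr (S, i)) < e (Sum.inl ((S.1.orderEmbOfFin S.2) a)))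
            = (univ : Finset (Fin t)).filter
              (fun i : Fin t => Gp p hp S.1 S.2 hm i ≤ (((S.1.orderEmbOfFin S.2) a : Fin n) : ℕ)) := by
          apply filter_congr
          intro i _
          rw [heiff, key_inr_lt_inl]
        rw [hfc, count_Gp hp S.1 S.2 hm a (hpet a)]
      rw [hpart1, hpart2]
      have := hpea a
      omega
    have hTimg : (S.1.image (fun j => e (Sum.inl j)))
        ∪ (univ.image (fun i : Fin t => e (Sum.inr (S, i)))) = T.image e := by
      rw [hT, image_union, image_image, image_image]
      rfl
    rw [hTimg, patt, image_image]
    have hSimg : S.1 = (univ : Finset (Fin m)).image (S.1.orderEmbOfFin S.2) := (image_univ_orderEmbOfFin S.2).symm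
    rw [hSimg, image_image]
    have : (univ : Finset (Fin m)).image ((rnk (T.image e) ∘ fun j => e (Sum.inl j)) ∘ (S.1.orderEmbOfFin S.2))
        = (univ : Finset (Fin m)).image (p.orderEmbOfFin hp) := by
      apply image_congr
      intro a _
      exact hrank a
    rw [this, image_univ_orderEmbOfFin hp]


end RamseySel

open RamseySel

/-- Quantitative bound in the Ramsey-type selection theorem: if `r` has the
classical Ramsey property `R_k(m;c)` and `R` has the classical Ramsey property
`R_r(n + C(n,m)·(r-m); C(r,m))`, then any set `X` with `|X| ≥ R`, together with
colorings `ρ V` of the `k`-subsets of each `V ⊆ X` by `c` colors, admits the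
conclusion of the selection theorem. -/
theorem ramsey_selection_bound (k m n c r R : ℕ) (hk : 0 < k) (hm : 0 < m)
    (hn : 0 < n) (hc : 0 < c)
    (hr : IsRamseyNum r k m c)
    (hR : IsRamseyNum R r (n + n.choose m * (r - m)) (r.choose m)) :
    ∀ (X : Finset ℕ) (ρ : Finset ℕ → Finset ℕ → Fin c), R ≤ X.card →
      ∃ Y ⊆ X, Y.card = n ∧ ∃ M : Finset ℕ → Finset ℕ,
        (∀ Z ⊆ Y, Z.card = m → M Z ⊆ X \ Y) ∧
        (∀ Z₁ ⊆ Y, ∀ Z₂ ⊆ Y, Z₁.card = m → Z₂.card = m → Z₁ ≠ Z₂ →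
          Disjoint (M Z₁) (M Z₂)) ∧
        (∀ Z ⊆ Y, Z.card = m → ∀ e₁ ⊆ Z, ∀ e₂ ⊆ Z, e₁.card = k → e₂.card = k →
          ρ (Z ∪ M Z) e₁ = ρ (Z ∪ M Z) e₂) := by
  intro X ρ hX
  classical
  have hmr : m ≤ r := by
    obtain ⟨Y0, hY0X, hY0c, -⟩ := hr (range r) (fun _ => ⟨0, hc⟩) (by simp)
    calc m = Y0.card := hY0c.symm
    _ ≤ (range r).card := card_le_card hY0X
    _ = r := card_range r
  have hch : 0 < r.choose m := Nat.choose_pos hmr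
  choose sel selsub selcard selmono using fun (V : Finset ℕ) (h : r ≤ V.card) => hr V (ρ V) h
  set PP := (range r).powersetCard m with hPPdef
  have hPPc : PP.card = r.choose m := by rw [hPPdef, card_powersetCard, card_range]
  set σ : Finset ℕ → Fin (r.choose m) := fun V =>
    if h : r ≤ V.card then
      if h2 : patt V (sel V h) ∈ PP then (Finset.equivFinOfCardEq hPPc) ⟨_, h2⟩
      else ⟨0, hch⟩
    else ⟨0, hch⟩ with hσ
  have hσeval : ∀ (V : Finset ℕ) (hVr : V.card = r)
      (hmem : patt V (sel V hVr.ge) ∈ PP),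
      σ V = (Finset.equivFinOfCardEq hPPc) ⟨_, hmem⟩ := by
    intro V hVr hmem
    simp only [hσ]
    rw [dif_pos hVr.ge, dif_pos hmem]
  obtain ⟨W, hWX, hWc, hWmono⟩ := hR X σ hX
  by_cases hmn : m ≤ n
  · -- main case
    have hq : 0 < n.choose m := Nat.choose_pos hmn
    set t := r - m with hts
    have hrN : r ≤ W.card := by
      have h1 : t ≤ n.choose m * t := Nat.le_mul_of_pos_left t hq
      omega
    obtain ⟨V₀, hV₀W, hV₀c⟩ := exists_subset_card_eq hrN
    have hp₀mem : patt V₀ (sel V₀ hV₀c.ge) ∈ PP :=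
      patt_mem (selsub _ _) hV₀c (selcard _ _)
    set p := patt V₀ (sel V₀ hV₀c.ge) with hpdef
    obtain ⟨hpsub, hpcard⟩ := mem_powersetCard.1 hp₀mem
    have hpatt : ∀ V, V ⊆ W → ∀ hVr : V.card = r, patt V (sel V hVr.ge) = p := by
      intro V hVW hVr
      have hmem1 : patt V (sel V hVr.ge) ∈ PP :=
        patt_mem (selsub _ _) hVr (selcard _ _)
      have heq := hWmono V hVW V₀ hV₀W hVr hV₀c
      rw [hσeval V hVr hmem1, hσeval V₀ hV₀c hp₀mem] at heq
      have h2 := (Finset.equivFinOfCardEq hPPc).injective heq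
      exact Subtype.ext_iff.1 h2
    obtain ⟨y, sp, hymem, hspmem, hyinj, hysp, hspinj, hpatt2⟩ :=
      core hm hmr hts hpcard hpsub hWc
    set Y := (univ : Finset (Fin n)).image y with hYdef
    have hYcard : Y.card = n := by
      rw [hYdef, card_image_of_injective _ hyinj, card_univ, Fintype.card_fin]
    have hYW : Y ⊆ W := by
      intro x hx
      obtain ⟨j, -, rfl⟩ := mem_image.1 hx
      exact hymem j
    set M : Finset ℕ → Finset ℕ := fun Z =>
      if h : ((univ : Finset (Fin n)).filter fun j => y j ∈ Z).card = m then
        univ.image (sp ⟨_, h⟩)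
      else ∅ with hMdef
    have hZfact : ∀ Z, Z ⊆ Y → Z.card = m →
        ∃ h : ((univ : Finset (Fin n)).filter fun j => y j ∈ Z).card = m,
          Z = ((univ : Finset (Fin n)).filter fun j => y j ∈ Z).image y := by
      intro Z hZY hZm
      have hZimg : Z = ((univ : Finset (Fin n)).filter fun j => y j ∈ Z).image y := by
        ext z
        simp only [mem_image, mem_filter, mem_univ, true_and]
        constructor
        · intro hz
          obtain ⟨j, -, rfl⟩ := mem_image.1 (hZY hz)
          exact ⟨j, hz, rfl⟩
        · rintro ⟨j, hj, rfl⟩; exact hj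
      refine ⟨?_, hZimg⟩
      rw [hZimg] at hZm
      rwa [card_image_of_injective _ hyinj] at hZm
    have hMeval : ∀ (Z : Finset ℕ)
        (h : ((univ : Finset (Fin n)).filter fun j => y j ∈ Z).card = m),
        M Z = univ.image (sp ⟨_, h⟩) := by
      intro Z h
      simp only [hMdef]
      rw [dif_pos h]
    have hspcardt : ∀ S : {S : Finset (Fin n) // S.card = m},
        (univ.image (sp S)).card = t := by
      intro S
      rw [card_image_of_injective _ (fun i i' hii => (hspinj S S i i' hii).2),
        card_univ, Fintype.card_fin]
    have hMW : ∀ (Z : Finset ℕ)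
        (h : ((univ : Finset (Fin n)).filter fun j => y j ∈ Z).card = m),
        M Z ⊆ W := by
      intro Z h x hx
      rw [hMeval Z h] at hx
      obtain ⟨i, -, rfl⟩ := mem_image.1 hx
      exact hspmem _ i
    refine ⟨Y, hYW.trans hWX, hYcard, M, ?_, ?_, ?_⟩
    · -- M Z ⊆ X \ Y
      intro Z hZY hZm
      obtain ⟨h, hZimg⟩ := hZfact Z hZY hZm
      intro x hx
      have hxW : x ∈ W := hMW Z h hx
      rw [hMeval Z h] at hx
      obtain ⟨i, -, rfl⟩ := mem_image.1 hx
      rw [mem_sdiff]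
      refine ⟨hWX hxW, fun hxY => ?_⟩
      obtain ⟨j, -, hji⟩ := mem_image.1 hxY
      exact hysp j _ i hji
    · -- disjointness
      intro Z₁ hZ₁Y Z₂ hZ₂Y h₁m h₂m hne
      obtain ⟨h₁, hZ₁img⟩ := hZfact Z₁ hZ₁Y h₁m
      obtain ⟨h₂, hZ₂img⟩ := hZfact Z₂ hZ₂Y h₂m
      rw [hMeval Z₁ h₁, hMeval Z₂ h₂, Finset.disjoint_left]
      intro x hx1 hx2
      obtain ⟨i₁, -, rfl⟩ := mem_image.1 hx1
      obtain ⟨i₂, -, heq⟩ := mem_image.1 hx2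
      have hSS := (hspinj _ _ _ _ heq.symm).1
      apply hne
      rw [hZ₁img, hZ₂img]
      exact congrArg (fun A : Finset (Fin n) => A.image y) (congrArg Subtype.val hSS)
    · -- monochromatic
      intro Z hZY hZm e₁ he₁ e₂ he₂ hk₁ hk₂
      obtain ⟨h, hZimg⟩ := hZfact Z hZY hZm
      have hVeq : Z ∪ M Z =
          ((⟨_, h⟩ : {S : Finset (Fin n) // S.card = m}).1.image y)
            ∪ (univ.image (sp ⟨_, h⟩)) := by
        rw [hMeval Z h]
        exact congrArg (fun A : Finset ℕ => A ∪ univ.image (sp ⟨_, h⟩)) hZimg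
      have hdisjZM : Disjoint
          (((⟨_, h⟩ : {S : Finset (Fin n) // S.card = m}).1).image y)
          (univ.image (sp ⟨_, h⟩)) := by
        rw [Finset.disjoint_left]
        intro x hx1 hx2
        obtain ⟨j, -, rfl⟩ := mem_image.1 hx1
        obtain ⟨i, -, heq⟩ := mem_image.1 hx2
        exact hysp j _ i heq.symm
      have hVc : (Z ∪ M Z).card = r := by
        rw [hVeq, card_union_of_disjoint hdisjZM,
          card_image_of_injective _ hyinj, hspcardt]
        simp only [h]
        omega
      have hVW : Z ∪ M Z ⊆ W := union_subset (hZY.trans hYW) (hMW Z h)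
      have hpZ : patt (Z ∪ M Z) Z = p := by
        rw [hVeq]
        exact (congrArg (patt _) hZimg).trans (hpatt2 ⟨_, h⟩)
      have hselZ : sel (Z ∪ M Z) hVc.ge = Z :=
        patt_inj (selsub _ _) subset_union_left
          ((hpatt (Z ∪ M Z) hVW hVc).trans hpZ.symm)
      rw [← hselZ] at he₁ he₂
      exact selmono (Z ∪ M Z) hVc.ge e₁ he₁ e₂ he₂ hk₁ hk₂
  · -- degenerate case n < m
    have hch0 : n.choose m = 0 := Nat.choose_eq_zero_of_lt (by omega)
    simp only [hch0, Nat.zero_mul, Nat.add_zero] at hWc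
    refine ⟨W, hWX, hWc, fun _ => ∅, ?_, ?_, ?_⟩
    · intro Z hZY hZm
      have := card_le_card hZY
      omega
    · intro Z₁ hZ₁ Z₂ hZ₂ h₁m h₂m hne
      have := card_le_card hZ₁
      omega
    · intro Z hZY hZm
      have := card_le_card hZY
      omega
end

section
/- Unboundedness of Carathéodory numbers: for every integer c ≥ 2 there exists a finite family F = {A₁,...,A_c} of subsets of a set X and a set S = {t₁,...,t_c} ⊆ X of c points, such that every intersection of members of F is nonempty, conv_F(S) = X, and there is a point x ∈ X with x ∈ conv_F(S) but x ∉ conv_F(S') for every proper subset S' ⊊ S. Concretely, take X the union of c pairwise disjoint nonempty sets T₁,...,T_c together with one extra point x, t_i ∈ T_i, and A_i = ⋃_{j ≠ i} T_j. -/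
open Classical

/-- The convex hull of `S` relative to a family `F` of subsets of `X`. -/
noncomputable def convF {X : Type*} (F : Set (Set X)) (S : Set X) : Set X :=
  if ∃ A ∈ F, S ⊆ A then ⋂₀ {A | A ∈ F ∧ S ⊆ A} else Set.univ

/-- Unboundedness of Carathéodory numbers: for every `c ≥ 2` there exist a set
`X`, a finite family `F = {A 0, …, A (c-1)}` of subsets of `X`, a set
`S = {t 0, …, t (c-1)}` of `c` distinct points and a point `x ∈ X` such that all
intersections of members of `F` are nonempty, `convF F S = X`, `x ∈ convF F S`,
but `x ∉ convF F S'` for every proper subset `S' ⊊ S`. -/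
theorem caratheodory_unbounded (c : ℕ) (hc : 2 ≤ c) :
    ∃ (X : Type) (A : Fin c → Set X) (t : Fin c → X) (x : X),
      Function.Injective t ∧
      (∀ s : Finset (Fin c), (⋂ i ∈ s, A i).Nonempty) ∧
      convF (Set.range A) (Set.range t) = Set.univ ∧
      x ∈ convF (Set.range A) (Set.range t) ∧
      (∀ S' : Set X, S' ⊆ Set.range t → S' ≠ Set.range t →
        x ∉ convF (Set.range A) S') := by
  refine ⟨Fin c ⊕ Bool, fun i => ({Sum.inl i, Sum.inr false} : Set (Fin c ⊕ Bool))ᶜ,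
    fun i => Sum.inl i, Sum.inr false, ?_, ?_, ?_, ?_, ?_⟩
  · intro a b hab; exact Sum.inl.inj hab
  · intro s
    refine ⟨Sum.inr true, ?_⟩
    simp [Set.mem_iInter]
  · have hno : ¬ ∃ B ∈ Set.range (fun i => ({Sum.inl i, Sum.inr false} : Set (Fin c ⊕ Bool))ᶜ),
        Set.range (fun i : Fin c => (Sum.inl i : Fin c ⊕ Bool)) ⊆ B := by
      rintro ⟨B, ⟨i, rfl⟩, hB⟩
      have : (Sum.inl i : Fin c ⊕ Bool) ∈ ({Sum.inl i, Sum.inr false} : Set (Fin c ⊕ Bool))ᶜ :=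
        hB ⟨i, rfl⟩
      simp at this
    rw [convF, if_neg hno]
  · have hno : ¬ ∃ B ∈ Set.range (fun i => ({Sum.inl i, Sum.inr false} : Set (Fin c ⊕ Bool))ᶜ),
        Set.range (fun i : Fin c => (Sum.inl i : Fin c ⊕ Bool)) ⊆ B := by
      rintro ⟨B, ⟨i, rfl⟩, hB⟩
      have : (Sum.inl i : Fin c ⊕ Bool) ∈ ({Sum.inl i, Sum.inr false} : Set (Fin c ⊕ Bool))ᶜ :=
        hB ⟨i, rfl⟩
      simp at this
    rw [convF, if_neg hno]
    trivial
  · intro S' hsub hne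
    -- find i with Sum.inl i ∉ S'
    have hex : ∃ i : Fin c, (Sum.inl i : Fin c ⊕ Bool) ∉ S' := by
      by_contra h
      push_neg at h
      apply hne
      apply Set.Subset.antisymm hsub
      rintro z ⟨i, rfl⟩
      exact h i
    obtain ⟨i, hi⟩ := hex
    have hS'A : S' ⊆ ({Sum.inl i, Sum.inr false} : Set (Fin c ⊕ Bool))ᶜ := by
      intro z hz
      obtain ⟨j, rfl⟩ := hsub hz
      have hji : j ≠ i := by rintro rfl; exact hi hz
      simp [hji]
    have hyp : ∃ B ∈ Set.range (fun i => ({Sum.inl i, Sum.inr false} : Set (Fin c ⊕ Bool))ᶜ),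
        S' ⊆ B := ⟨_, ⟨i, rfl⟩, hS'A⟩
    rw [convF, if_pos hyp]
    intro hx
    have := hx _ ⟨⟨i, rfl⟩, hS'A⟩
    simp at this
end

section
/- In the Carathéodory star construction, for the family F = {A₁,...,A_c} with A_i = ⋃_{j≠i} T_j (where T₁,...,T_c are pairwise disjoint nonempty sets with t_i ∈ T_i, and X = T₁ ∪ ... ∪ T_c ∪ {x} for a point x outside all T_j): for every proper subset S' ⊊ {t₁,...,t_c}, conv_F(S') ⊆ ⋃_i A_i, and hence x ∉ conv_F(S'); but no member of F contains all of {t₁,...,t_c}, so conv_F({t₁,...,t_c}) = X ∋ x. -/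
open Classical

/-- The Carathéodory star construction: with `T 0, …, T (c-1)` pairwise disjoint
nonempty sets, `t i ∈ T i`, `x` a point outside all the `T j` such that
`X = T 0 ∪ … ∪ T (c-1) ∪ {x}`, and `A i = ⋃_{j ≠ i} T j`: for every proper
subset `S'` of `{t 0, …, t (c-1)}` we have `convF F S' ⊆ ⋃ i, A i` and hence
`x ∉ convF F S'`; but no member of `F` contains all the `t i`, so
`convF F {t 0, …, t (c-1)} = X`, which contains `x`. -/
theorem caratheodory_star {X : Type*} (c : ℕ) (hc : 2 ≤ c)
    (T : Fin c → Set X) (t : Fin c → X) (x : X)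
    (hdisj : ∀ i j, i ≠ j → Disjoint (T i) (T j))
    (hne : ∀ i, (T i).Nonempty) (ht : ∀ i, t i ∈ T i)
    (hx : x ∉ ⋃ j, T j) (hcov : Set.univ = (⋃ j, T j) ∪ {x}) :
    (∀ S' : Set X, S' ⊆ Set.range t → S' ≠ Set.range t →
      convF (Set.range fun i => ⋃ j ∈ ({i}ᶜ : Set (Fin c)), T j) S' ⊆ (⋃ i, ⋃ j ∈ ({i}ᶜ : Set (Fin c)), T j) ∧
      x ∉ convF (Set.range fun i => ⋃ j ∈ ({i}ᶜ : Set (Fin c)), T j) S') ∧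
    (∀ i, ¬ (Set.range t ⊆ ⋃ j ∈ ({i}ᶜ : Set (Fin c)), T j)) ∧
    convF (Set.range fun i => ⋃ j ∈ ({i}ᶜ : Set (Fin c)), T j) (Set.range t) = Set.univ := by
  set A : Fin c → Set X := fun i => ⋃ j ∈ ({i}ᶜ : Set (Fin c)), T j with hA
  have htA : ∀ i j : Fin c, i ≠ j → t i ∈ A j := by
    intro i j hij
    exact Set.mem_biUnion (by simpa using hij) (ht i)
  have htnA : ∀ i : Fin c, t i ∉ A i := by
    intro i hmem
    rcases Set.mem_iUnion₂.1 hmem with ⟨j, hj, hj2⟩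
    exact (hdisj i j (by simpa [eq_comm] using hj)).ne_of_mem (ht i) hj2 rfl
  have hxA : x ∉ ⋃ i, A i := by
    intro hmem
    rcases Set.mem_iUnion.1 hmem with ⟨i, hi⟩
    rcases Set.mem_iUnion₂.1 hi with ⟨j, _, hj⟩
    exact hx (Set.mem_iUnion.2 ⟨j, hj⟩)
  refine ⟨?_, ?_, ?_⟩
  · intro S' hsub hne'
    have : ∃ i, t i ∉ S' := by
      by_contra h
      push_neg at h
      exact hne' (Set.Subset.antisymm hsub (Set.range_subset_iff.2 h))
    obtain ⟨i, hi⟩ := this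
    have hSA : S' ⊆ A i := by
      intro y hy
      rcases hsub hy with ⟨j, rfl⟩
      exact htA j i (fun h => hi (h ▸ hy))
    have hcond : ∃ B ∈ Set.range A, S' ⊆ B := ⟨A i, ⟨i, rfl⟩, hSA⟩
    have hsubU : convF (Set.range A) S' ⊆ ⋃ i, A i := by
      rw [convF, if_pos hcond]
      have hmem : A i ∈ {B | B ∈ Set.range A ∧ S' ⊆ B} := ⟨⟨i, rfl⟩, hSA⟩
      exact (Set.sInter_subset_of_mem hmem).trans (Set.subset_iUnion A i)
    exact ⟨hsubU, fun hxc => hxA (hsubU hxc)⟩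
  · intro i hsub
    exact htnA i (hsub (Set.mem_range_self i))
  · rw [convF, if_neg]
    rintro ⟨B, ⟨i, rfl⟩, hsub⟩
    exact htnA i (hsub (Set.mem_range_self i))
end

section
/- Bootstrapping step for fractional density (abstract version): let k ≥ 2 and suppose there are constants c₁ > 0, c₂ ≥ 0 such that for any induced subfamily B of A on m vertices, if no (k+2)-tuple of B intersects then the number of intersecting (k+1)-tuples of B is at most (c₁+c₂)·C(m,k). Then for every α₁ ∈ (0,1) there exists α₂ > 0 such that for all sufficiently large families A of n sets: if at least α₁·C(n,k+1) of the (k+1)-tuples of A have a common point, then at least α₂·C(n,k+2) of the (k+2)-tuples of A have a common point. -/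
/-- The number of intersecting `j`-tuples of the family `A 0, …, A (n-1)`. -/
noncomputable def interCount {X : Type*} (n j : ℕ) (A : Fin n → Set X) : ℕ :=
  Nat.card {I : Finset (Fin n) // I.card = j ∧ (⋂ i ∈ I, A i).Nonempty}

open Finset

open Classical in
noncomputable def iSets {X : Type*} (n j : ℕ) (A : Fin n → Set X) : Finset (Finset (Fin n)) :=
  univ.filter (fun I => I.card = j ∧ (⋂ i ∈ I, A i).Nonempty)

lemma interCount_eq {X : Type*} (n j : ℕ) (A : Fin n → Set X) :
    interCount n j A = (iSets n j A).card := by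
  classical
  rw [interCount, Nat.card_eq_fintype_card, Fintype.card_subtype, iSets]

lemma mem_iSets {X : Type*} {n j : ℕ} {A : Fin n → Set X} {I : Finset (Fin n)} :
    I ∈ iSets n j A ↔ I.card = j ∧ (⋂ i ∈ I, A i).Nonempty := by
  classical
  simp [iSets]

/-- induced count -/
lemma interCount_comp {X : Type*} {n m j : ℕ} (A : Fin n → Set X) (g : Fin m ↪ Fin n) :
    interCount m j (A ∘ g) = ((iSets n j A).filter (fun J => J ⊆ univ.map g)).card := by
  classical
  rw [interCount_eq]
  apply Finset.card_bij (fun I _ => I.map g)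
  · intro I hI
    rw [mem_iSets] at hI
    simp only [mem_filter, mem_iSets, Finset.card_map]
    refine ⟨⟨hI.1, ?_⟩, Finset.map_subset_map.2 (subset_univ I)⟩
    obtain ⟨x, hx⟩ := hI.2
    refine ⟨x, ?_⟩
    simp only [Set.mem_iInter, Finset.mem_map] at hx ⊢
    rintro i ⟨a, ha, rfl⟩
    exact hx a ha
  · intro I _ I' _ h
    exact Finset.map_injective g h
  · intro J hJ
    simp only [mem_filter, mem_iSets] at hJ
    obtain ⟨u, -, rfl⟩ := Finset.subset_map_iff.1 hJ.2
    refine ⟨u, ?_, rfl⟩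
    rw [mem_iSets]
    refine ⟨by simpa using hJ.1.1, ?_⟩
    obtain ⟨x, hx⟩ := hJ.1.2
    refine ⟨x, ?_⟩
    simp only [Set.mem_iInter, Finset.mem_map] at hx ⊢
    intro a ha
    exact hx _ ⟨a, ha, rfl⟩

/-- number of m-subsets of univ containing a fixed set -/
lemma card_supersets {n m : ℕ} (J : Finset (Fin n)) (hJm : J.card ≤ m) :
    ((powersetCard m (univ : Finset (Fin n))).filter (fun S => J ⊆ S)).card
      = (n - J.card).choose (m - J.card) := by
  classical
  have : ((powersetCard m (univ : Finset (Fin n))).filter (fun S => J ⊆ S)).card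
      = (powersetCard (m - J.card) Jᶜ).card := by
    apply Finset.card_bij' (fun S _ => S \ J) (fun U _ => U ∪ J)
    · intro S hS
      simp only [mem_filter, Finset.mem_powersetCard] at hS
      rw [Finset.mem_powersetCard]
      constructor
      · intro x hx
        simp only [Finset.mem_sdiff] at hx
        simpa [Finset.mem_compl] using hx.2
      · rw [Finset.card_sdiff_of_subset hS.2, hS.1.2]
    · intro U hU
      rw [Finset.mem_powersetCard] at hU
      have hdisj : Disjoint U J := by
        rw [Finset.disjoint_left]
        intro x hx
        have := hU.1 hx
        simpa [Finset.mem_compl] using this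
      simp only [mem_filter, Finset.mem_powersetCard]
      refine ⟨⟨subset_univ _, ?_⟩, Finset.subset_union_right⟩
      rw [Finset.card_union_of_disjoint hdisj, hU.2]
      omega
    · intro S hS
      simp only [mem_filter] at hS
      exact Finset.sdiff_union_of_subset hS.2
    · intro U hU
      rw [Finset.mem_powersetCard] at hU
      apply Finset.union_sdiff_cancel_right
      rw [Finset.disjoint_right]
      intro x hx hxU
      exact (Finset.mem_compl.1 (hU.1 hxU)) hx
  rw [this, Finset.card_powersetCard, Finset.card_compl, Fintype.card_fin]

lemma sum_filter_subset_card {n m j : ℕ} (𝒥 : Finset (Finset (Fin n)))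
    (hcard : ∀ J ∈ 𝒥, J.card = j) (hj : j ≤ m) :
    ∑ S ∈ powersetCard m (univ : Finset (Fin n)), (𝒥.filter (· ⊆ S)).card
      = 𝒥.card * (n - j).choose (m - j) := by
  classical
  simp_rw [Finset.card_filter]
  rw [Finset.sum_comm]
  rw [Finset.sum_congr rfl (fun J hJ => ?_), Finset.sum_const, smul_eq_mul]
  rw [← Finset.card_filter]
  rw [card_supersets J (by rw [hcard J hJ]; exact hj), hcard J hJ]


set_option maxHeartbeats 800000 in
/-- Bootstrapping step for fractional density (abstract version): let `k ≥ 2`,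
`c₁ > 0`, `c₂ ≥ 0`.  For every `α₁ ∈ (0,1)` there is `α₂ > 0` such that for all
sufficiently large `n` and families `A` of `n` sets with the property that every
induced subfamily `B` of `A` on `m` sets with no intersecting `(k+2)`-tuple has
at most `(c₁+c₂)·C(m,k)` intersecting `(k+1)`-tuples: if at least
`α₁·C(n,k+1)` of the `(k+1)`-tuples of `A` intersect, then at least
`α₂·C(n,k+2)` of the `(k+2)`-tuples of `A` intersect. -/
theorem bootstrap_step {X : Type*} (k : ℕ) (hk : 2 ≤ k)
    (c₁ c₂ : ℝ) (h₁ : 0 < c₁) (h₂ : 0 ≤ c₂)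
    (α₁ : ℝ) (hα₁ : 0 < α₁) (hα₁' : α₁ < 1) :
    ∃ α₂ : ℝ, 0 < α₂ ∧ ∃ n₀ : ℕ, ∀ n, n₀ ≤ n → ∀ A : Fin n → Set X,
      (∀ (m : ℕ) (g : Fin m ↪ Fin n),
        interCount m (k + 2) (A ∘ g) = 0 →
        (interCount m (k + 1) (A ∘ g) : ℝ) ≤ (c₁ + c₂) * (m.choose k : ℝ)) →
      α₁ * (n.choose (k + 1) : ℝ) ≤ (interCount n (k + 1) A : ℝ) →
      α₂ * (n.choose (k + 2) : ℝ) ≤ (interCount n (k + 2) A : ℝ) := by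
  classical
  set M : ℕ := k + 2 + ⌈2 * ((k : ℝ) + 1) * (c₁ + c₂) / α₁⌉₊ with hMdef
  have hkM : k + 2 ≤ M := Nat.le_add_right _ _
  have hc : 0 ≤ c₁ + c₂ := by linarith
  have hCMk2 : 0 < (M.choose (k + 2) : ℝ) := by exact_mod_cast Nat.choose_pos hkM
  refine ⟨α₁ / (2 * (M.choose (k + 2) : ℝ)), by positivity, M, fun n hn A hH hF1 => ?_⟩
  -- the key choice inequality for M
  have h1 : (M.choose (k + 1) : ℝ) * ((k : ℝ) + 1) = (M.choose k : ℝ) * ((M : ℝ) - k) := by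
    have h := Nat.choose_succ_right_eq M k
    have hkM' : k ≤ M := by omega
    calc (M.choose (k + 1) : ℝ) * ((k : ℝ) + 1)
        = ((M.choose (k + 1) * (k + 1) : ℕ) : ℝ) := by push_cast; ring
      _ = ((M.choose k * (M - k) : ℕ) : ℝ) := by rw [h]
      _ = (M.choose k : ℝ) * ((M : ℝ) - k) := by
          rw [Nat.cast_mul, Nat.cast_sub hkM']
  have hMk : ((M : ℝ) - k) = 2 + (⌈2 * ((k : ℝ) + 1) * (c₁ + c₂) / α₁⌉₊ : ℝ) := by
    have : (M : ℝ) = (k : ℝ) + 2 + (⌈2 * ((k : ℝ) + 1) * (c₁ + c₂) / α₁⌉₊ : ℝ) := by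
      rw [hMdef]; push_cast; ring
    linarith
  have h2 : 2 * ((k : ℝ) + 1) * (c₁ + c₂) ≤ α₁ * ((M : ℝ) - k) := by
    have hceil : 2 * ((k : ℝ) + 1) * (c₁ + c₂) / α₁
        ≤ (⌈2 * ((k : ℝ) + 1) * (c₁ + c₂) / α₁⌉₊ : ℝ) := Nat.le_ceil _
    have hmul := mul_le_mul_of_nonneg_left hceil hα₁.le
    have hcanc : α₁ * (2 * ((k : ℝ) + 1) * (c₁ + c₂) / α₁) = 2 * ((k : ℝ) + 1) * (c₁ + c₂) := by
      field_simp
    rw [hMk]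
    nlinarith [hmul, hcanc]
  have hchoice : (c₁ + c₂) * (M.choose k : ℝ) ≤ α₁ / 2 * (M.choose (k + 1) : ℝ) := by
    have hCMk : (0 : ℝ) ≤ (M.choose k : ℝ) := by positivity
    have p := mul_le_mul_of_nonneg_right h2 hCMk
    have e : α₁ * ((M : ℝ) - k) * (M.choose k : ℝ)
        = α₁ * ((M.choose (k + 1) : ℝ) * ((k : ℝ) + 1)) := by rw [h1]; ring
    have hcl : (c₁ + c₂) * (M.choose k : ℝ) * (2 * ((k : ℝ) + 1))
        ≤ α₁ / 2 * (M.choose (k + 1) : ℝ) * (2 * ((k : ℝ) + 1)) := by nlinarith [p, e]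
    exact le_of_mul_le_mul_right hcl (by positivity)
  clear hMdef
  clear_value M
  -- counting setup
  have hMn : M ≤ n := hn
  rw [interCount_eq] at hF1 ⊢
  set 𝒮 := powersetCard M (univ : Finset (Fin n)) with h𝒮
  have hcard𝒮 : 𝒮.card = n.choose M := by
    rw [h𝒮, Finset.card_powersetCard, Finset.card_univ, Fintype.card_fin]
  set J1 := iSets n (k + 1) A with hJ1
  set J2 := iSets n (k + 2) A with hJ2
  set a : Finset (Fin n) → ℕ := fun S => (J1.filter (· ⊆ S)).card with ha
  set b : Finset (Fin n) → ℕ := fun S => (J2.filter (· ⊆ S)).card with hb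
  have hsum1 : ∑ S ∈ 𝒮, a S = J1.card * (n - (k + 1)).choose (M - (k + 1)) :=
    sum_filter_subset_card _ (fun J hJ => (mem_iSets.1 hJ).1) (by omega)
  have hsum2 : ∑ S ∈ 𝒮, b S = J2.card * (n - (k + 2)).choose (M - (k + 2)) :=
    sum_filter_subset_card _ (fun J hJ => (mem_iSets.1 hJ).1) (by omega)
  set bad := 𝒮.filter (fun S => ∃ J ∈ J2, J ⊆ S) with hbad
  have hTle : bad.card ≤ ∑ S ∈ 𝒮, b S := by
    calc bad.card = ∑ S ∈ bad, 1 := by rw [Finset.card_eq_sum_ones]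
      _ ≤ ∑ S ∈ bad, b S := by
          refine Finset.sum_le_sum (fun S hS => ?_)
          rw [hbad, Finset.mem_filter] at hS
          obtain ⟨-, J, hJ, hJS⟩ := hS
          exact Finset.card_pos.2 ⟨J, Finset.mem_filter.2 ⟨hJ, hJS⟩⟩
      _ ≤ ∑ S ∈ 𝒮, b S :=
          Finset.sum_le_sum_of_subset (Finset.filter_subset _ _)
  have hinduced : ∀ S ∈ 𝒮, ∃ g : Fin M ↪ Fin n, univ.map g = S := by
    intro S hS
    rw [h𝒮, Finset.mem_powersetCard] at hS
    refine ⟨(S.orderEmbOfFin hS.2).toEmbedding, ?_⟩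
    ext i
    simp only [Finset.mem_map, Finset.mem_univ, true_and,
      RelEmbedding.coe_toEmbedding]
    constructor
    · rintro ⟨a, rfl⟩
      exact Finset.orderEmbOfFin_mem S hS.2 a
    · intro hi
      have : i ∈ Set.range (S.orderEmbOfFin hS.2) := by
        rw [Finset.range_orderEmbOfFin]; exact hi
      obtain ⟨c, hc⟩ := this
      exact ⟨c, hc⟩
  have hgood : ∀ S ∈ 𝒮 \ bad, (a S : ℝ) ≤ (c₁ + c₂) * (M.choose k : ℝ) := by
    intro S hS
    rw [Finset.mem_sdiff, hbad, Finset.mem_filter] at hS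
    obtain ⟨hS𝒮, hnb⟩ := hS
    obtain ⟨g, hg⟩ := hinduced S hS𝒮
    have h0 : interCount M (k + 2) (A ∘ g) = 0 := by
      rw [interCount_comp, hg, Finset.card_eq_zero, Finset.filter_eq_empty_iff]
      intro J hJ hJS
      exact hnb ⟨hS𝒮, J, hJ, hJS⟩
    have hb := hH M g h0
    rwa [interCount_comp, hg] at hb
  have habound : ∀ S ∈ 𝒮, a S ≤ M.choose (k + 1) := by
    intro S hS
    rw [h𝒮, Finset.mem_powersetCard] at hS
    calc a S ≤ (Finset.powersetCard (k + 1) S).card := by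
          apply Finset.card_le_card
          intro J hJ
          rw [Finset.mem_filter] at hJ
          rw [Finset.mem_powersetCard]
          exact ⟨hJ.2, (mem_iSets.1 hJ.1).1⟩
      _ = M.choose (k + 1) := by rw [Finset.card_powersetCard, hS.2]
  -- real-number abbreviations and choose identities
  have hid1 : (n.choose M : ℝ) * (M.choose (k + 1) : ℝ)
      = (n.choose (k + 1) : ℝ) * ((n - (k + 1)).choose (M - (k + 1)) : ℝ) := by
    exact_mod_cast congrArg (Nat.cast (R := ℝ)) (Nat.choose_mul (n := n) (k := M) (s := k + 1) (by omega))
  have hid2 : (n.choose M : ℝ) * (M.choose (k + 2) : ℝ)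
      = (n.choose (k + 2) : ℝ) * ((n - (k + 2)).choose (M - (k + 2)) : ℝ) := by
    exact_mod_cast congrArg (Nat.cast (R := ℝ)) (Nat.choose_mul (n := n) (k := M) (s := k + 2) (by omega))
  have hCM1 : 0 < (M.choose (k + 1) : ℝ) := by
    exact_mod_cast Nat.choose_pos (by omega)
  have hCn2 : 0 < ((n - (k + 2)).choose (M - (k + 2)) : ℝ) := by
    exact_mod_cast Nat.choose_pos (by omega)
  -- main chain
  have stepA : α₁ * ((n.choose M : ℝ) * (M.choose (k + 1) : ℝ))
      ≤ ∑ S ∈ 𝒮, (a S : ℝ) := by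
    have hCn1 : (0 : ℝ) ≤ ((n - (k + 1)).choose (M - (k + 1)) : ℝ) := by positivity
    have e2 : (∑ S ∈ 𝒮, (a S : ℝ))
        = (J1.card : ℝ) * ((n - (k + 1)).choose (M - (k + 1)) : ℝ) := by
      rw [← Nat.cast_sum]
      exact_mod_cast congrArg (Nat.cast (R := ℝ)) hsum1
    rw [e2, hid1, ← mul_assoc]
    exact mul_le_mul_of_nonneg_right hF1 hCn1
  have stepB : ∑ S ∈ 𝒮, (a S : ℝ)
      ≤ (bad.card : ℝ) * (M.choose (k + 1) : ℝ)
        + (n.choose M : ℝ) * ((c₁ + c₂) * (M.choose k : ℝ)) := by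
    rw [← Finset.sum_sdiff (Finset.filter_subset (fun S => ∃ J ∈ J2, J ⊆ S) 𝒮)]
    have hb1 : ∑ S ∈ 𝒮 \ bad, (a S : ℝ)
        ≤ (n.choose M : ℝ) * ((c₁ + c₂) * (M.choose k : ℝ)) := by
      calc ∑ S ∈ 𝒮 \ bad, (a S : ℝ)
          ≤ ∑ S ∈ 𝒮 \ bad, (c₁ + c₂) * (M.choose k : ℝ) :=
            Finset.sum_le_sum hgood
        _ = ((𝒮 \ bad).card : ℝ) * ((c₁ + c₂) * (M.choose k : ℝ)) := by
            rw [Finset.sum_const, nsmul_eq_mul]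
        _ ≤ (n.choose M : ℝ) * ((c₁ + c₂) * (M.choose k : ℝ)) := by
            apply mul_le_mul_of_nonneg_right _ (by positivity)
            have : (𝒮 \ bad).card ≤ 𝒮.card := Finset.card_le_card (Finset.sdiff_subset)
            rw [← hcard𝒮]
            exact_mod_cast this
    have hb2 : ∑ S ∈ bad, (a S : ℝ) ≤ (bad.card : ℝ) * (M.choose (k + 1) : ℝ) := by
      calc ∑ S ∈ bad, (a S : ℝ)
          ≤ ∑ S ∈ bad, (M.choose (k + 1) : ℝ) := by
            refine Finset.sum_le_sum (fun S hS => ?_)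
            exact_mod_cast habound S (Finset.filter_subset _ _ hS)
        _ = (bad.card : ℝ) * (M.choose (k + 1) : ℝ) := by
            rw [Finset.sum_const, nsmul_eq_mul]
    linarith
  have hT : α₁ / 2 * (n.choose M : ℝ) ≤ (bad.card : ℝ) := by
    have hCnM : (0 : ℝ) ≤ (n.choose M : ℝ) := by positivity
    have hx := mul_le_mul_of_nonneg_left hchoice hCnM
    have : α₁ / 2 * (n.choose M : ℝ) * (M.choose (k + 1) : ℝ)
        ≤ (bad.card : ℝ) * (M.choose (k + 1) : ℝ) := by nlinarith [stepA, stepB, hx]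
    exact le_of_mul_le_mul_right this hCM1
  have hT2 : (bad.card : ℝ) ≤ (J2.card : ℝ) * ((n - (k + 2)).choose (M - (k + 2)) : ℝ) := by
    calc (bad.card : ℝ) ≤ ((∑ S ∈ 𝒮, b S : ℕ) : ℝ) := by exact_mod_cast hTle
      _ = (J2.card : ℝ) * ((n - (k + 2)).choose (M - (k + 2)) : ℝ) := by
          exact_mod_cast congrArg (Nat.cast (R := ℝ)) hsum2
  have hfinal : α₁ / 2 * (n.choose (k + 2) : ℝ) ≤ (J2.card : ℝ) * (M.choose (k + 2) : ℝ) := by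
    have h3 : α₁ / 2 * ((n.choose M : ℝ) * (M.choose (k + 2) : ℝ))
        ≤ (J2.card : ℝ) * ((n - (k + 2)).choose (M - (k + 2)) : ℝ) * (M.choose (k + 2) : ℝ) := by
      have := mul_le_mul_of_nonneg_right (hT.trans hT2) hCMk2.le
      linarith [this]
    rw [hid2] at h3
    have h4 : α₁ / 2 * (n.choose (k + 2) : ℝ) * ((n - (k + 2)).choose (M - (k + 2)) : ℝ)
        ≤ (J2.card : ℝ) * (M.choose (k + 2) : ℝ) * ((n - (k + 2)).choose (M - (k + 2)) : ℝ) := by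
      linarith [h3]
    exact le_of_mul_le_mul_right h4 hCn2
  rw [div_mul_eq_mul_div, div_le_iff₀ (by positivity)]
  linarith [hfinal]
end
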